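/- arXiv:1402.3573 — 6 statements merged into one kernel-verified Lean document; each statement's English description precedes it below -/
import Mathlib

section
/- If a finite simple graph G admits a tree 3-spanner T having a 5-center {u,v}, then G admits a uv-concentrated tree 3-spanner, i.e., a tree 3-spanner T' with 5-center {u,v} such that every G-neighbor of u that is strictly closer in T' to u than to v is a T'-neighbor of u, and every G-neighbor of v that is strictly closer in T' to v than to u is a T'-neighbor of v. -/
/-!
Root `T` at `u` and re-hang every vertex on the `u`-side (resp. `v`-side) of the edge `uv` that is
a `G`-neighbour of `u` (resp. `v`) directly at `u` (resp. `v`). The distance to `u` still drops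
along every new parent edge, so the result is a spanning tree of `G`, and every vertex is within
distance two of the center `c ∈ {u, v}` of its side. Such a tree is `uv`-concentrated: a
`G`-neighbour of `c` on the other side is at distance at most two from `c'`, so it cannot be
strictly closer to `c` without being adjacent to it.

As every vertex is within distance two of `u` or `v`, the stretch bound only needs checking on
`G`-edges `xy`, where `T.dist x y ≤ 3`. This is immediate unless an endpoint `x` is left at depth
two below a `T`-neighbour `z` of its center `c`; then `y` is `c'` or lies on the `c`-side, and in
the latter case it is within distance one of `c` in the new tree or, as `T` is acyclic, another
child of `z`.
-/

open SimpleGraph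

namespace SimpleGraph

variable {V : Type*} {G : SimpleGraph V}

theorem Walk.dist_add_dist_le_length {x y w : V} (p : G.Walk x y) (hw : w ∈ p.support) :
    G.dist x w + G.dist w y ≤ p.length := by
  classical
  rw [← p.take_spec hw, Walk.length_append]
  exact add_le_add (dist_le _) (dist_le _)

theorem IsAcyclic.dist_eq_length (hG : G.IsAcyclic) {x y : V} {p : G.Walk x y} (hp : p.IsPath) :
    G.dist x y = p.length := by
  obtain ⟨q, hq, hql⟩ := p.reachable.exists_path_of_dist
  have : q = p := congrArg Subtype.val ((hG.subsingleton_path x y).elim ⟨q, hq⟩ ⟨p, hp⟩)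
  rw [← hql, this]

theorem Connected.exists_adj_dist_lt (hG : G.Connected) {u x : V} (hx : x ≠ u) :
    ∃ z, G.Adj z x ∧ G.dist u z < G.dist u x := by
  obtain ⟨p, hp⟩ := (hG x u).exists_walk_length_eq_dist
  cases p with
  | nil => exact absurd rfl hx
  | @cons _ z _ h q =>
    refine ⟨z, h.symm, ?_⟩
    rw [dist_comm (u := u), dist_comm (u := u), ← hp, Walk.length_cons]
    exact Nat.lt_succ_of_le (dist_le q)

/-- In a tree, the edge `ab` lies on the path between any vertex `x` closer to `a` and any vertex
`y` closer to `b`. -/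
theorem IsTree.dist_eq_add_of_adj (hG : G.IsTree) {a b x y : V} (hab : G.Adj a b)
    (hx : G.dist a x < G.dist b x) (hy : G.dist b y < G.dist a y) :
    G.dist x y = G.dist x a + 1 + G.dist b y := by
  obtain ⟨p, hp, hpl⟩ := hG.connected.exists_path_of_dist x a
  obtain ⟨q, hq, hql⟩ := hG.connected.exists_path_of_dist b y
  rw [dist_comm (u := a), dist_comm (u := b) (v := x)] at hx
  have hp_side : ∀ w ∈ p.support, G.dist w a < G.dist w b := fun w hw => by
    have := p.dist_add_dist_le_length hw
    have := hG.connected.dist_triangle (u := x) (v := w) (w := b)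
    omega
  have hq_side : ∀ w ∈ q.support, G.dist b w < G.dist a w := fun w hw => by
    have := q.dist_add_dist_le_length hw
    have := hG.connected.dist_triangle (u := a) (v := w) (w := y)
    omega
  have hpath : (p.append (.cons hab q)).IsPath := by
    rw [Walk.isPath_def, Walk.support_append, Walk.support_cons, List.tail_cons,
      List.nodup_append]
    refine ⟨hp.support_nodup, hq.support_nodup, fun w hwp w' hwq hww' => ?_⟩
    have := hp_side w hwp
    have := hq_side w' hwq
    subst hww'
    rw [dist_comm (u := b), dist_comm (u := a)] at this
    omega
  rw [hG.isAcyclic.dist_eq_length hpath, Walk.length_append, Walk.length_cons, hpl, hql]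
  ring

theorem IsTree.eq_of_adj_of_dist_lt (hG : G.IsTree) {c y z₁ z₂ : V}
    (h₁ : G.Adj z₁ y) (h₂ : G.Adj z₂ y)
    (hd₁ : G.dist c z₁ < G.dist c y) (hd₂ : G.dist c z₂ < G.dist c y) :
    z₁ = z₂ := by
  by_contra hne
  have hz : G.dist z₁ z₂ = 2 := by
    have := hG.dist_eq_dist_add_one_of_adj z₁ h₂
    rw [dist_eq_one_iff_adj.mpr h₁] at this
    have := (hG.connected.dist_eq_zero_iff (u := z₁) (v := z₂)).not.mpr hne
    omega
  have hy : G.dist y z₂ = 1 := dist_eq_one_iff_adj.mpr h₂.symm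
  rw [dist_comm (v := z₁), dist_comm (u := c) (v := y)] at hd₁
  have hcz₂ := hG.dist_eq_add_of_adj h₁ (x := c) (y := z₂) hd₁ (by omega)
  have := hG.connected.dist_triangle (u := c) (v := z₁) (w := y)
  rw [dist_eq_one_iff_adj.mpr h₁] at this
  omega

theorem IsTree.dist_lt_or_lt_of_adj (hG : G.IsTree) {a b : V} (hab : G.Adj a b) (x : V) :
    G.dist a x < G.dist b x ∨ G.dist b x < G.dist a x := by
  rw [dist_comm, dist_comm (u := b)]
  exact lt_or_gt_of_ne (hG.dist_ne_of_adj x hab)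

theorem IsTree.eq_of_dist_le_three (hG : G.IsTree) {c x y z₁ z₂ : V} (hcz₁ : G.Adj c z₁)
    (hz₁x : G.Adj z₁ x) (hcz₂ : G.Adj c z₂) (hz₂y : G.Adj z₂ y) (hx : G.dist c x = 2)
    (hy : G.dist c y = 2) (hxy : G.dist x y ≤ 3) : z₁ = z₂ := by
  by_contra hne
  have hz₁y : G.dist z₁ y = 3 := by
    rcases hG.dist_eq_dist_add_one_of_adj y hcz₁.symm with h | h
    · rw [dist_comm (u := y), dist_comm (u := y), hy] at h
      exact h
    · have h1 : G.dist y z₁ = 1 := by rw [dist_comm (u := y) (v := c), hy] at h; omega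
      refine absurd (hG.eq_of_adj_of_dist_lt (c := c) (dist_eq_one_iff_adj.mp h1).symm hz₂y
        ?_ ?_) hne <;> simp [dist_eq_one_iff_adj.mpr, hcz₁, hcz₂, hy]
  have := hG.dist_eq_add_of_adj hcz₁.symm (x := x) (y := y)
    (by rw [dist_eq_one_iff_adj.mpr hz₁x, hx]; omega) (by omega)
  rw [dist_comm (u := x) (v := z₁), dist_eq_one_iff_adj.mpr hz₁x] at this
  omega

theorem Connected.dist_le_five (hG : G.Connected) {u v : V} (huv : G.Adj u v)
    (h : ∀ w, G.dist u w ≤ 2 ∨ G.dist v w ≤ 2) (x y : V) : G.dist x y ≤ 5 := by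
  have := hG.dist_triangle (u := x) (v := u) (w := y)
  have := hG.dist_triangle (u := x) (v := v) (w := y)
  have := hG.dist_triangle (u := u) (v := v) (w := y)
  have := hG.dist_triangle (u := v) (v := u) (w := y)
  have : G.dist x u = G.dist u x := dist_comm
  have : G.dist x v = G.dist v x := dist_comm
  have : G.dist u v = 1 := dist_eq_one_iff_adj.mpr huv
  have : G.dist v u = 1 := dist_eq_one_iff_adj.mpr huv.symm
  rcases h x with hx | hx <;> rcases h y with hy | hy <;> omega

theorem dist_le_three_mul_of_forall_adj {H : SimpleGraph V} (hG : G.Connected)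
    (hH : ∀ x y, H.dist x y ≤ 5) (hadj : ∀ x y, G.Adj x y → H.dist x y ≤ 3) (x y : V) :
    H.dist x y ≤ 3 * G.dist x y := by
  by_cases hxy : x = y
  · simp [hxy]
  by_cases hG₁ : G.Adj x y
  · simpa [dist_eq_one_iff_adj.mpr hG₁] using hadj x y hG₁
  · have := hG.one_lt_dist_of_ne_of_not_adj hxy hG₁
    have := hH x y
    omega

/-- The tree with root `r` and parent function `p` (the value `p r` is ignored). -/
def parentGraph (p : V → V) (r : V) : SimpleGraph V :=
  fromRel fun x y => x ≠ r ∧ p x = y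

section parentGraph

variable {p : V → V} {r : V}

theorem parentGraph_adj {x : V} (hx : x ≠ r) (hpx : p x ≠ x) : (parentGraph p r).Adj (p x) x :=
  (fromRel_adj _ _ _).mpr ⟨hpx, .inr ⟨hx, rfl⟩⟩

theorem parentGraph_le (h : ∀ x ≠ r, G.Adj x (p x)) : parentGraph p r ≤ G := by
  intro a b hab
  obtain ⟨-, ⟨ha, rfl⟩ | ⟨hb, rfl⟩⟩ := (fromRel_adj _ _ _).mp hab
  · exact h a ha
  · exact (h b hb).symm

variable (rank : V → ℕ) (hrank : ∀ x ≠ r, rank (p x) < rank x)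
include hrank

theorem parentGraph_reachable (x : V) : (parentGraph p r).Reachable r x := by
  induction hx : rank x using Nat.strong_induction_on generalizing x with
  | _ n ih =>
    by_cases hxr : x = r
    · rw [hxr]
    · have hpx : p x ≠ x := fun h => (hrank x hxr).ne (congrArg rank h)
      exact (ih _ (hx ▸ hrank x hxr) _ rfl).trans (parentGraph_adj hxr hpx).reachable

/-- Every edge `x (p x)` is a bridge: a walk from `x` to `p x` must leave the set of descendants
of `x`, and the only edge doing so is `x (p x)`. -/
theorem isBridge_parentGraph {x : V} (hx : x ≠ r) : (parentGraph p r).IsBridge s(x, p x) := by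
  let R : V → V → Prop := fun a b => a ≠ r ∧ p a = b
  have rank_le : ∀ {a b}, Relation.ReflTransGen R a b → rank b ≤ rank a := fun h => by
    induction h with
    | refl => exact le_rfl
    | tail _ hbc ih => exact (hbc.2 ▸ (hrank _ hbc.1).le).trans ih
  rw [isBridge_iff_forall_walk_mem_edges]
  intro q
  have hpx : ¬ Relation.ReflTransGen R (p x) x := fun h => (hrank x hx).not_ge (rank_le h)
  obtain ⟨d, hd, hin, hout⟩ :=
    q.exists_boundary_dart {a | Relation.ReflTransGen R a x} .refl hpx
  simp only [Set.mem_ofPred_eq] at hin hout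
  obtain ⟨-, hR | hR⟩ := (fromRel_adj _ _ _).mp d.adj
  · rcases hin.cases_head with h | ⟨c, hc, hcx⟩
    · have : d.edge = s(x, p x) := by
        rw [Dart.edge, Sym2.mk, ← h, ← hR.2]
      exact this ▸ List.mem_map_of_mem hd
    · exact absurd (hR.2 ▸ hc.2 ▸ hcx) hout
  · exact absurd (Relation.ReflTransGen.head (r := R) hR hin) hout

theorem isTree_parentGraph : (parentGraph p r).IsTree := by
  refine ⟨(connected_iff _).mpr ⟨fun a b => (parentGraph_reachable rank hrank a).symm.trans
    (parentGraph_reachable rank hrank b), ⟨r⟩⟩, ?_⟩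
  rw [isAcyclic_iff_forall_adj_isBridge]
  intro a b hab
  obtain ⟨-, ⟨ha, rfl⟩ | ⟨hb, rfl⟩⟩ := (fromRel_adj _ _ _).mp hab
  · exact isBridge_parentGraph rank hrank ha
  · exact Sym2.eq_swap ▸ isBridge_parentGraph rank hrank hb

end parentGraph

section SideAttached

variable {T T' : SimpleGraph V} {c c' : V}

/-- `T.dist c x < T.dist c' x` says that `x` lies on the `c`-side of the edge `cc'` of `T`. -/
def IsSideAttached (G T T' : SimpleGraph V) (c c' : V) : Prop :=
  ∀ x, T.dist c x < T.dist c' x → x ≠ c →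
    (G.Adj c x → T'.Adj c x) ∧
      (¬ G.Adj c x → ∃ z, T.Adj c z ∧ T.Adj z x ∧ T'.Adj c z ∧ T'.Adj z x)

namespace IsSideAttached

theorem dist_le_two (hc : IsSideAttached G T T' c c') {x : V} (hx : T.dist c x < T.dist c' x) :
    T'.dist c x ≤ 2 := by
  by_cases hxc : x = c
  · simp [hxc]
  by_cases hcx : G.Adj c x
  · exact (dist_le ((hc x hx hxc).1 hcx).toWalk).trans (by simp)
  · obtain ⟨z, -, -, hcz, hzx⟩ := (hc x hx hxc).2 hcx
    exact (dist_le (.cons hcz (.cons hzx .nil))).trans (by simp)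

theorem dist_le_one_or (hc : IsSideAttached G T T' c c') (hle : T ≤ G) {x : V}
    (hx : T.dist c x < T.dist c' x) :
    T'.dist c x ≤ 1 ∨
      T.dist c x = 2 ∧ ∃ z, T.Adj c z ∧ T.Adj z x ∧ T'.Adj c z ∧ T'.Adj z x := by
  by_cases hxc : x = c
  · simp [hxc]
  by_cases hcx : G.Adj c x
  · exact .inl <| (dist_le ((hc x hx hxc).1 hcx).toWalk).trans (by simp)
  obtain ⟨z, hcz, hzx, hcz', hzx'⟩ := (hc x hx hxc).2 hcx
  have h2 : T.dist c x ≤ 2 := dist_le (.cons hcz (.cons hzx .nil))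
  have h1 : 1 < T.dist c x := (hcz.reachable.trans hzx.reachable).one_lt_dist_of_ne_of_not_adj
    (Ne.symm hxc) fun h => hcx (hle h)
  exact .inr ⟨by omega, z, hcz, hzx, hcz', hzx'⟩

theorem adj_of_dist_lt (hT : T.IsTree) (hcc' : T.Adj c c') (hT' : T'.Connected)
    (hc : IsSideAttached G T T' c c') (hc' : IsSideAttached G T T' c' c) {w : V}
    (hcw : G.Adj c w) (hlt : T'.dist w c < T'.dist w c') : T'.Adj c w := by
  rcases hT.dist_lt_or_lt_of_adj hcc' w with hw | hw
  · exact (hc w hw hcw.ne').1 hcw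
  · by_contra hnadj
    have h2 := hc'.dist_le_two hw
    have h0 : T'.dist w c ≠ 0 := fun h => hcw.ne' (hT'.dist_eq_zero_iff.mp h)
    have h1 : T'.dist w c ≠ 1 := fun h => hnadj (dist_eq_one_iff_adj.mp h).symm
    rw [dist_comm] at h2
    omega

theorem dist_le_three (hT : T.IsTree) (hle : T ≤ G) (hcc' : T.Adj c c') (hT' : T'.Connected)
    (hT'cc' : T'.Adj c c') (hc : IsSideAttached G T T' c c') (hc' : IsSideAttached G T T' c' c)
    {x y : V} (hx : T.dist c x < T.dist c' x) (hxy : T.dist x y ≤ 3) : T'.dist x y ≤ 3 := by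
  have hcc'₁ : T'.dist c c' = 1 := dist_eq_one_iff_adj.mpr hT'cc'
  have hxcy := hT'.dist_triangle (u := x) (v := c) (w := y)
  have hcc'y := hT'.dist_triangle (u := c) (v := c') (w := y)
  have hxc : T'.dist x c = T'.dist c x := dist_comm
  rcases hc.dist_le_one_or hle hx with hx1 | ⟨hx2, zx, hczx, hzxx, -, hzxx'⟩ <;>
    rcases hT.dist_lt_or_lt_of_adj hcc' y with hy | hy
  · have := hc.dist_le_two hy
    omega
  · rcases hc'.dist_le_one_or hle hy with hy1 | ⟨hy2, -⟩
    · omega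
    · have hyx := hT.dist_eq_add_of_adj hcc'.symm hy hx
      have : T.dist y x = T.dist x y := dist_comm
      have : T.dist y c' = T.dist c' y := dist_comm
      have : T.dist x c = T.dist c x := dist_comm
      obtain rfl : x = c := hT.connected.dist_eq_zero_iff.mp (by omega)
      have := hc'.dist_le_two hy
      omega
  · rcases hc.dist_le_one_or hle hy with hy1 | ⟨hy2, zy, hczy, hzyy, -, hzyy'⟩
    · have := hc.dist_le_two hx
      omega
    · obtain rfl := hT.eq_of_dist_le_three hczx hzxx hczy hzyy hx2 hy2 hxy
      exact (dist_le (.cons hzxx'.symm (.cons hzyy' .nil))).trans (by simp)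
  · have hxy' := hT.dist_eq_add_of_adj hcc' hx hy
    have : T.dist x c = T.dist c x := dist_comm
    obtain rfl : c' = y := hT.connected.dist_eq_zero_iff.mp (by omega)
    have := hT'.dist_triangle (u := x) (v := c) (w := c')
    have := hc.dist_le_two hx
    omega

end IsSideAttached

end SideAttached

section Concentration

variable {T : SimpleGraph V} {u v x : V}

open scoped Classical in
/-- Parent function of the concentrated tree rooted at `u`; a vertex that is not re-hung at `u` or
`v` keeps a parent it has in `T` rooted at `u`. -/
noncomputable def concentratedParent (G T : SimpleGraph V) (u v x : V) : V :=
  if T.dist u x < T.dist v x ∧ G.Adj u x then u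
  else if T.dist v x < T.dist u x ∧ G.Adj v x then v
  else
    haveI : Nonempty V := ⟨x⟩
    Classical.epsilon fun z => T.Adj z x ∧ T.dist u z < T.dist u x

theorem concentratedParent_of_left (hx : T.dist u x < T.dist v x) (hux : G.Adj u x) :
    concentratedParent G T u v x = u :=
  if_pos ⟨hx, hux⟩

theorem concentratedParent_of_right (hx : T.dist v x < T.dist u x) (hvx : G.Adj v x) :
    concentratedParent G T u v x = v := by
  rw [concentratedParent, if_neg fun h => hx.asymm h.1, if_pos ⟨hx, hvx⟩]

theorem concentratedParent_spec (hT : T.Connected) (hxu : x ≠ u)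
    (hu : ¬(T.dist u x < T.dist v x ∧ G.Adj u x))
    (hv : ¬(T.dist v x < T.dist u x ∧ G.Adj v x)) :
    T.Adj (concentratedParent G T u v x) x ∧
      T.dist u (concentratedParent G T u v x) < T.dist u x := by
  rw [concentratedParent, if_neg hu, if_neg hv]
  exact Classical.epsilon_spec (hT.exists_adj_dist_lt hxu)

theorem dist_concentratedParent_lt (hT : T.IsTree) (huv : T.Adj u v) (hxu : x ≠ u) :
    T.dist u (concentratedParent G T u v x) < T.dist u x := by
  have hx₀ := hT.connected.pos_dist_of_ne (Ne.symm hxu)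
  by_cases hu : T.dist u x < T.dist v x ∧ G.Adj u x
  · simpa [concentratedParent_of_left hu.1 hu.2] using hx₀
  by_cases hv : T.dist v x < T.dist u x ∧ G.Adj v x
  · rw [concentratedParent_of_right hv.1 hv.2, dist_eq_one_iff_adj.mpr huv]
    have := hT.connected.pos_dist_of_ne hv.2.ne
    omega
  exact (concentratedParent_spec hT.connected hxu hu hv).2

theorem adj_concentratedParent (hT : T.IsTree) (hle : T ≤ G) (hxu : x ≠ u) :
    G.Adj x (concentratedParent G T u v x) := by
  by_cases hu : T.dist u x < T.dist v x ∧ G.Adj u x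
  · rw [concentratedParent_of_left hu.1 hu.2]
    exact hu.2.symm
  by_cases hv : T.dist v x < T.dist u x ∧ G.Adj v x
  · rw [concentratedParent_of_right hv.1 hv.2]
    exact hv.2.symm
  exact (hle (concentratedParent_spec hT.connected hxu hu hv).1).symm

noncomputable def concentratedTree (G T : SimpleGraph V) (u v : V) : SimpleGraph V :=
  parentGraph (concentratedParent G T u v) u

theorem isTree_concentratedTree (hT : T.IsTree) (huv : T.Adj u v) :
    (concentratedTree G T u v).IsTree :=
  isTree_parentGraph (T.dist u) fun _ => dist_concentratedParent_lt hT huv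

theorem concentratedTree_le (hT : T.IsTree) (hle : T ≤ G) : concentratedTree G T u v ≤ G :=
  parentGraph_le fun _ => adj_concentratedParent hT hle

theorem concentratedTree_adj_concentratedParent (hT : T.IsTree) (huv : T.Adj u v) (hxu : x ≠ u) :
    (concentratedTree G T u v).Adj (concentratedParent G T u v x) x := by
  refine parentGraph_adj hxu fun h => ?_
  have := dist_concentratedParent_lt (G := G) hT huv hxu
  rw [h] at this
  exact this.false

theorem concentratedTree_adj (hT : T.IsTree) (huv : T.Adj u v) :
    (concentratedTree G T u v).Adj u v := by
  have hp := dist_concentratedParent_lt (G := G) hT huv huv.ne'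
  rw [dist_eq_one_iff_adj.mpr huv, Nat.lt_one_iff, hT.connected.dist_eq_zero_iff] at hp
  simpa [← hp] using concentratedTree_adj_concentratedParent (G := G) hT huv huv.ne'

theorem isSideAttached_left (hT : T.IsTree) (hle : T ≤ G) (huv : T.Adj u v)
    (hcenter : ∀ w, T.dist u w ≤ 2 ∨ T.dist v w ≤ 2) :
    IsSideAttached G T (concentratedTree G T u v) u v := by
  intro x hx hxu
  have hpx := concentratedTree_adj_concentratedParent (G := G) hT huv hxu
  refine ⟨fun hux => by rwa [concentratedParent_of_left hx hux] at hpx, fun hux => ?_⟩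
  obtain ⟨hzx, hzu⟩ := concentratedParent_spec (v := v) hT.connected hxu
    (fun h => hux h.2) (fun h => hx.asymm h.1)
  set z := concentratedParent G T u v x
  have hux₂ : T.dist u x = 2 := by
    have := hT.connected.pos_dist_of_ne hxu.symm
    have : T.dist u x ≠ 1 := fun h => hux (hle (dist_eq_one_iff_adj.mp h))
    rcases hcenter x with h | h <;> omega
  have huz : T.dist u z = 1 := by
    rcases hT.dist_eq_dist_add_one_of_adj u hzx with h | h <;> omega
  have hvz : T.dist v z = 2 := by
    have hzv : z ≠ v := by
      rintro hzv
      rw [hzv] at hzx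
      have := dist_eq_one_iff_adj.mpr hzx
      omega
    have := hT.connected.pos_dist_of_ne hzv.symm
    have := hT.dist_eq_dist_add_one_of_adj z huv
    rw [dist_comm (u := z), dist_comm (u := z)] at this
    omega
  have hpz := concentratedTree_adj_concentratedParent (G := G) hT huv (x := z) fun h => by
    rw [h] at huz; simp at huz
  rw [concentratedParent_of_left (by omega) (hle (dist_eq_one_iff_adj.mp huz))] at hpz
  exact ⟨z, dist_eq_one_iff_adj.mp huz, hzx, hpz, hpx⟩

theorem isSideAttached_right (hT : T.IsTree) (hle : T ≤ G) (huv : T.Adj u v)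
    (hcenter : ∀ w, T.dist u w ≤ 2 ∨ T.dist v w ≤ 2) :
    IsSideAttached G T (concentratedTree G T u v) v u := by
  intro x hx hxv
  have hxu : x ≠ u := fun h => by rw [h] at hx; simp at hx
  have hpx := concentratedTree_adj_concentratedParent (G := G) hT huv hxu
  refine ⟨fun hvx => by rwa [concentratedParent_of_right hx hvx] at hpx, fun hvx => ?_⟩
  obtain ⟨hzx, hzu⟩ := concentratedParent_spec (G := G) hT.connected hxu
    (fun h => hx.asymm h.1) (fun h => hvx h.2)
  set z := concentratedParent G T u v x
  have hvx₂ : T.dist v x = 2 := by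
    have := hT.connected.pos_dist_of_ne hxv.symm
    have : T.dist v x ≠ 1 := fun h => hvx (hle (dist_eq_one_iff_adj.mp h))
    rcases hcenter x with h | h <;> omega
  have hux₃ : T.dist u x = 3 := by
    have := hT.dist_eq_dist_add_one_of_adj x huv
    rw [dist_comm (u := x), dist_comm (u := x)] at this
    omega
  have huz : T.dist u z = 2 := by
    rcases hT.dist_eq_dist_add_one_of_adj u hzx with h | h <;> omega
  have hvz : T.dist v z = 1 := by
    have hside : T.dist v z < T.dist u z := by
      refine (hT.dist_lt_or_lt_of_adj huv z).resolve_left fun hz => ?_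
      have := hT.dist_eq_add_of_adj huv hz hx
      rw [dist_eq_one_iff_adj.mpr hzx, dist_comm (u := z), huz, hvx₂] at this
      omega
    have := hT.dist_eq_dist_add_one_of_adj z huv
    rw [dist_comm (u := z), dist_comm (u := z)] at this
    omega
  have hpz := concentratedTree_adj_concentratedParent (G := G) hT huv (x := z) fun h => by
    rw [h] at huz; simp at huz
  rw [concentratedParent_of_right (by omega) (hle (dist_eq_one_iff_adj.mp hvz))] at hpz
  exact ⟨z, dist_eq_one_iff_adj.mp hvz, hzx, hpz, hpx⟩

end Concentration

end SimpleGraph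

theorem stmt_4_general {V : Type*} (G T : SimpleGraph V) (u v : V)
    (hle : T ≤ G) (hT : T.IsTree)
    (hspan : ∀ x y : V, T.dist x y ≤ 3 * G.dist x y)
    (hadj : T.Adj u v)
    (hcenter : ∀ w : V, T.dist u w ≤ 2 ∨ T.dist v w ≤ 2) :
    ∃ T' : SimpleGraph V, T' ≤ G ∧ T'.IsTree ∧
      (∀ x y : V, T'.dist x y ≤ 3 * G.dist x y) ∧
      T'.Adj u v ∧ (∀ w : V, T'.dist u w ≤ 2 ∨ T'.dist v w ≤ 2) ∧
      (∀ w : V, G.Adj u w → T'.dist w u < T'.dist w v → T'.Adj u w) ∧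
      (∀ w : V, G.Adj v w → T'.dist w v < T'.dist w u → T'.Adj v w) := by
  have hT' : (concentratedTree G T u v).IsTree := isTree_concentratedTree hT hadj
  have hT'uv : (concentratedTree G T u v).Adj u v := concentratedTree_adj hT hadj
  have hu := isSideAttached_left hT hle hadj hcenter
  have hv := isSideAttached_right hT hle hadj hcenter
  have hcenter' : ∀ w, (concentratedTree G T u v).dist u w ≤ 2 ∨
      (concentratedTree G T u v).dist v w ≤ 2 := fun w =>
    (hT.dist_lt_or_lt_of_adj hadj w).imp hu.dist_le_two hv.dist_le_two
  refine ⟨concentratedTree G T u v, concentratedTree_le hT hle, hT', ?_, hT'uv, hcenter',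
    fun _ => hu.adj_of_dist_lt hT hadj hT'.connected hv,
    fun _ => hv.adj_of_dist_lt hT hadj.symm hT'.connected hu⟩
  refine dist_le_three_mul_of_forall_adj (hT.connected.mono hle)
    (hT'.connected.dist_le_five hT'uv hcenter') fun x y hxy => ?_
  have hxy₃ : T.dist x y ≤ 3 := by simpa [dist_eq_one_iff_adj.mpr hxy] using hspan x y
  rcases hT.dist_lt_or_lt_of_adj hadj x with hx | hx
  · exact hu.dist_le_three hT hle hadj hT'.connected hT'uv hv hx hxy₃
  · exact hv.dist_le_three hT hle hadj.symm hT'.connected hT'uv.symm hu hx hxy₃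

/-- If `G` admits a tree 3-spanner with 5-center `{u,v}`, then `G` admits a
`uv`-concentrated tree 3-spanner. -/
theorem stmt_4 {V : Type*} [Fintype V] (G T : SimpleGraph V) (u v : V)
    (hle : T ≤ G) (hT : T.IsTree)
    (hspan : ∀ x y : V, T.dist x y ≤ 3 * G.dist x y)
    (hadj : T.Adj u v)
    (hcenter : ∀ w : V, T.dist u w ≤ 2 ∨ T.dist v w ≤ 2) :
    ∃ T' : SimpleGraph V, T' ≤ G ∧ T'.IsTree ∧
      (∀ x y : V, T'.dist x y ≤ 3 * G.dist x y) ∧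
      T'.Adj u v ∧ (∀ w : V, T'.dist u w ≤ 2 ∨ T'.dist v w ≤ 2) ∧
      (∀ w : V, G.Adj u w → T'.dist w u < T'.dist w v → T'.Adj u w) ∧
      (∀ w : V, G.Adj v w → T'.dist w v < T'.dist w u → T'.Adj v w) :=
  stmt_4_general G T u v hle hT hspan hadj hcenter
end

section
/- Let G be a finite simple graph with an edge uv such that every vertex of G lies in the closed neighborhood N_G[u] ∪ N_G[v]. Then the spanning subgraph T with edge set {ux : x ∈ N_G(u)} ∪ {vx : x ∈ N_G(v) \ N_G[u]} is a tree 3-spanner of G of diameter at most 3. -/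
/-!
The spanning subgraph `T` is the double star of the edge `uv`: every vertex other than `u` and `v`
has exactly one `T`-neighbour, namely `u` if it is adjacent to `u` and `v` otherwise. A cycle has at
least three vertices, each with two cycle neighbours, so it would pass through a vertex other than
`u` and `v`; hence `T` is acyclic. Every vertex is within distance one of `u` or `v`, so `T` is
connected of diameter at most `3`, and since distinct vertices are at `G`-distance at least `1`,
the diameter bound already makes `T` a tree `3`-spanner.
-/

namespace SimpleGraph

variable {V : Type*}

section TwoCenters

variable {T : SimpleGraph V} {u v : V}

lemma isAcyclic_of_neighborSet_subsingleton
    (h : ∀ w, w ≠ u → w ≠ v → (T.neighborSet w).Subsingleton) : T.IsAcyclic := by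
  classical
  intro x c hc
  obtain ⟨w, hw, hwuv⟩ : ∃ w ∈ c.support.tail.toFinset, w ∉ ({u, v} : Finset V) := by
    apply Finset.exists_mem_notMem_of_card_lt_card
    rw [List.toFinset_card_of_nodup hc.support_nodup, List.length_tail, Walk.length_support]
    have := hc.three_le_length
    have := Finset.card_le_two (a := u) (b := v)
    omega
  rw [List.mem_toFinset] at hw
  simp only [Finset.mem_insert, Finset.mem_singleton, not_or] at hwuv
  have hsub := (h w hwuv.1 hwuv.2).anti (c.toSubgraph.neighborSet_subset w)
  have : Finite (c.toSubgraph.neighborSet w) := hsub.finite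
  have hle_one := Set.ncard_le_one_iff_subsingleton.2 hsub
  have heq_two := hc.ncard_neighborSet_toSubgraph_eq_two (List.mem_of_mem_tail hw)
  omega

lemma connected_of_dominating_edge (huv : T.Adj u v)
    (hdom : ∀ x, x = u ∨ x = v ∨ T.Adj u x ∨ T.Adj v x) : T.Connected := by
  refine (connected_iff_exists_forall_reachable T).2 ⟨u, fun x => ?_⟩
  rcases hdom x with rfl | rfl | h | h
  · rfl
  · exact huv.reachable
  · exact h.reachable
  · exact huv.reachable.trans h.reachable

lemma dist_le_three_of_dominating_edge (huv : T.Adj u v)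
    (hdom : ∀ x, x = u ∨ x = v ∨ T.Adj u x ∨ T.Adj v x) (x y : V) : T.dist x y ≤ 3 := by
  have hconn := connected_of_dominating_edge huv hdom
  have hhub : ∀ x, ∃ w, (w = u ∨ w = v) ∧ T.dist w x ≤ 1 := by
    intro x
    rcases hdom x with rfl | rfl | h | h
    · exact ⟨x, .inl rfl, by simp⟩
    · exact ⟨x, .inr rfl, by simp⟩
    · exact ⟨u, .inl rfl, (dist_eq_one_iff_adj.2 h).le⟩
    · exact ⟨v, .inr rfl, (dist_eq_one_iff_adj.2 h).le⟩
  obtain ⟨a, ha, hax⟩ := hhub x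
  obtain ⟨b, hb, hby⟩ := hhub y
  have hab : T.dist a b ≤ 1 := by
    rcases ha with rfl | rfl <;> rcases hb with rfl | rfl <;>
      simp [dist_eq_one_iff_adj.2 huv, dist_eq_one_iff_adj.2 huv.symm]
  calc T.dist x y ≤ T.dist x a + T.dist a b + T.dist b y :=
        hconn.dist_triangle.trans (Nat.add_le_add_right hconn.dist_triangle _)
    _ ≤ 3 := by rw [dist_comm] at hax; omega

end TwoCenters

lemma Connected.dist_le_mul_dist_of_le {G T : SimpleGraph V} (hT : T.Connected) (hle : T ≤ G)
    {k : ℕ} (hk : ∀ x y, T.dist x y ≤ k) (x y : V) : T.dist x y ≤ k * G.dist x y := by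
  rcases eq_or_ne x y with rfl | hxy
  · simp
  · calc T.dist x y ≤ k * 1 := (mul_one k).symm ▸ hk x y
      _ ≤ k * G.dist x y := Nat.mul_le_mul_left k ((hT.mono hle).pos_dist_of_ne hxy)

section DoubleStar

variable (G : SimpleGraph V) (u v : V)

def doubleStar : SimpleGraph V :=
  fromRel fun x y => (x = u ∧ G.Adj u y) ∨ (x = v ∧ G.Adj v y ∧ ¬ G.Adj u y ∧ y ≠ u)

variable {G u v}

lemma doubleStar_le : doubleStar G u v ≤ G := by
  intro a b hab
  rw [doubleStar, fromRel_adj] at hab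
  rcases hab.2 with (⟨rfl, h⟩ | ⟨rfl, h, -⟩) | (⟨rfl, h⟩ | ⟨rfl, h, -⟩)
  exacts [h, h, h.symm, h.symm]

lemma doubleStar_adj_of_adj_left {x : V} (h : G.Adj u x) : (doubleStar G u v).Adj u x :=
  (fromRel_adj _ _ _).2 ⟨h.ne, .inl (.inl ⟨rfl, h⟩)⟩

lemma doubleStar_dominating (hcov : ∀ w, w = u ∨ w = v ∨ G.Adj u w ∨ G.Adj v w) (x : V) :
    x = u ∨ x = v ∨ (doubleStar G u v).Adj u x ∨ (doubleStar G u v).Adj v x := by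
  rcases hcov x with rfl | rfl | h | h
  · exact .inl rfl
  · exact .inr (.inl rfl)
  · exact .inr (.inr (.inl (doubleStar_adj_of_adj_left h)))
  · by_cases hux : G.Adj u x
    · exact .inr (.inr (.inl (doubleStar_adj_of_adj_left hux)))
    by_cases hxu : x = u
    · exact .inl hxu
    exact .inr (.inr (.inr ((fromRel_adj _ _ _).2 ⟨h.ne, .inl (.inr ⟨rfl, h, hux, hxu⟩)⟩)))

lemma doubleStar_adj_of_ne {w a : V} (hwu : w ≠ u) (hwv : w ≠ v)
    (h : (doubleStar G u v).Adj w a) : (a = u ∧ G.Adj u w) ∨ (a = v ∧ ¬ G.Adj u w) := by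
  rw [doubleStar, fromRel_adj] at h
  rcases h.2 with (⟨rfl, -⟩ | ⟨rfl, -⟩) | (⟨rfl, h⟩ | ⟨rfl, -, h, -⟩)
  exacts [(hwu rfl).elim, (hwv rfl).elim, .inl ⟨rfl, h⟩, .inr ⟨rfl, h⟩]

lemma doubleStar_neighborSet_subsingleton {w : V} (hwu : w ≠ u) (hwv : w ≠ v) :
    ((doubleStar G u v).neighborSet w).Subsingleton := by
  intro a ha b hb
  rcases doubleStar_adj_of_ne hwu hwv ha with ⟨rfl, hau⟩ | ⟨rfl, hau⟩ <;>
    rcases doubleStar_adj_of_ne hwu hwv hb with ⟨rfl, hbu⟩ | ⟨rfl, hbu⟩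
  exacts [rfl, absurd hau hbu, absurd hbu hau, rfl]

end DoubleStar

end SimpleGraph

theorem stmt_5_general {V : Type*} (G : SimpleGraph V)
    (u v : V) (huv : G.Adj u v)
    (hcov : ∀ w : V, w = u ∨ w = v ∨ G.Adj u w ∨ G.Adj v w)
    (T : SimpleGraph V)
    (hT : T = SimpleGraph.fromRel (fun x y =>
      (x = u ∧ G.Adj u y) ∨ (x = v ∧ G.Adj v y ∧ ¬ G.Adj u y ∧ y ≠ u))) :
    T ≤ G ∧ T.IsTree ∧ (∀ x y : V, T.dist x y ≤ 3 * G.dist x y) ∧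
      (∀ x y : V, T.dist x y ≤ 3) := by
  change T = SimpleGraph.doubleStar G u v at hT
  subst hT
  have huvT := SimpleGraph.doubleStar_adj_of_adj_left (v := v) huv
  have hdom := SimpleGraph.doubleStar_dominating hcov
  have hconn := SimpleGraph.connected_of_dominating_edge huvT hdom
  have hdiam := SimpleGraph.dist_le_three_of_dominating_edge huvT hdom
  exact ⟨SimpleGraph.doubleStar_le,
    ⟨hconn, SimpleGraph.isAcyclic_of_neighborSet_subsingleton
      fun _ => SimpleGraph.doubleStar_neighborSet_subsingleton⟩,
    hconn.dist_le_mul_dist_of_le SimpleGraph.doubleStar_le hdiam, hdiam⟩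

/-- If `N_G[u] ∪ N_G[v]` covers `G`, the double star at the edge `uv` is a tree 3-spanner
of `G` of diameter at most 3. -/
theorem stmt_5 {V : Type*} [Fintype V] (G : SimpleGraph V) (hG : G.Connected)
    (u v : V) (huv : G.Adj u v)
    (hcov : ∀ w : V, w = u ∨ w = v ∨ G.Adj u w ∨ G.Adj v w)
    (T : SimpleGraph V)
    (hT : T = SimpleGraph.fromRel (fun x y =>
      (x = u ∧ G.Adj u y) ∨ (x = v ∧ G.Adj v y ∧ ¬ G.Adj u y ∧ y ≠ u))) :
    T ≤ G ∧ T.IsTree ∧ (∀ x y : V, T.dist x y ≤ 3 * G.dist x y) ∧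
      (∀ x y : V, T.dist x y ≤ 3) :=
  stmt_5_general G u v huv hcov T hT
end

section
/- Let G be a finite simple graph with a uv-concentrated tree 3-spanner T, and let Q be a connected component of G \ N_G[u,v] containing a vertex p at T-distance exactly 2 from u. Let Q^u be the connected component of G \ N_G[u] containing Q, and let r be the T-neighbor of p (so that r is T-adjacent to u). Then every vertex of Q^u is T-adjacent to r. -/
/-!
Being a `T`-neighbour of `r` propagates along `G`-edges inside `G \ N_G[u]`. Let `w` be a
`T`-neighbour of `r` and `w'` a `G`-neighbour of `w` with `d_T(u, w') ≥ 2`; the spanner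
property gives `d_T(w, w') ≤ 3`. In a tree the distance to `w'` changes by exactly one along
each edge of the path `w – r – u – v`, and every vertex has at most one neighbour closer to
`w'`. Together with the 5-center condition at `w'` this leaves only `d_T(r, w') = 1`.
-/

namespace SimpleGraph

variable {V : Type*} {G : SimpleGraph V}

theorem Reachable.induction_of_adj {P : V → Prop} (h : ∀ ⦃x y⦄, G.Adj x y → P x → P y)
    {x y : V} (hxy : G.Reachable x y) (hx : P x) : P y := by
  rw [reachable_iff_reflTransGen] at hxy
  induction hxy with
  | refl => exact hx
  | tail _ hab ih => exact h hab ih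

theorem IsAcyclic.eq_of_adj_of_dist_add_one_eq (hG : G.IsAcyclic) {x y y' z : V}
    (hy : G.Adj x y) (hy' : G.Adj x y') (h : G.dist z y + 1 = G.dist z x)
    (h' : G.dist z y' + 1 = G.dist z x) : y = y' := by
  have hzx : G.Reachable z x := Reachable.of_dist_ne_zero (by omega)
  have geodesic_via {t : V} (ht : G.Adj x t) (h : G.dist z t + 1 = G.dist z x) :
      ∃ p : G.Path z x, p.1.penultimate = t := by
    obtain ⟨q, hq⟩ := (hzx.trans ht.reachable).exists_walk_length_eq_dist
    have hpath : (q.concat ht.symm).IsPath :=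
      Walk.isPath_of_length_eq_dist _ (by rw [Walk.length_concat, hq, h])
    exact ⟨⟨_, hpath⟩, Walk.penultimate_concat _ _⟩
  obtain ⟨p, rfl⟩ := geodesic_via hy h
  obtain ⟨p', rfl⟩ := geodesic_via hy' h'
  rw [(hG.subsingleton_path z x).elim p p']

theorem IsTree.adj_of_dist_le_three (hG : G.IsTree) {u v r w w' : V} (huv : G.Adj u v)
    (hur : G.Adj u r) (hrw : G.Adj r w) (hrv : r ≠ v) (hwu : w ≠ u) (hw'u : 2 ≤ G.dist u w')
    (hww' : G.dist w w' ≤ 3) (hcenter : G.dist u w' ≤ 2 ∨ G.dist v w' ≤ 2) : G.Adj r w' := by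
  rw [dist_comm] at hw'u hww' hcenter
  rw [dist_comm (u := v)] at hcenter
  have hrw' := hG.dist_eq_dist_add_one_of_adj w' hrw
  have hur' := hG.dist_eq_dist_add_one_of_adj w' hur
  have huv' := hG.dist_eq_dist_add_one_of_adj w' huv
  have hr : ¬(G.dist w' w + 1 = G.dist w' r ∧ G.dist w' u + 1 = G.dist w' r) := fun ⟨h, h'⟩ ↦
    hwu (hG.isAcyclic.eq_of_adj_of_dist_add_one_eq hrw hur.symm h h')
  have hu : ¬(G.dist w' r + 1 = G.dist w' u ∧ G.dist w' v + 1 = G.dist w' u) := fun ⟨h, h'⟩ ↦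
    hrv (hG.isAcyclic.eq_of_adj_of_dist_add_one_eq hur huv h h')
  rw [← dist_eq_one_iff_adj, dist_comm]
  omega

end SimpleGraph

theorem stmt_7_general {V : Type*} (G T : SimpleGraph V) (u v p r : V)
    (hle : T ≤ G) (hT : T.IsTree)
    (hspan : ∀ x y : V, T.dist x y ≤ 3 * G.dist x y)
    (hadj : T.Adj u v)
    (hcenter : ∀ w : V, T.dist u w ≤ 2 ∨ T.dist v w ≤ 2)
    (hp : ¬ (p = u ∨ p = v ∨ G.Adj u p ∨ G.Adj v p))
    (hpr : T.Adj p r) (hru : T.Adj r u)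
    (Su : Set V) (hSu : Su = {w | w ≠ u ∧ ¬ G.Adj u w}) (hpSu : p ∈ Su) :
    ∀ w : V, ∀ hw : w ∈ Su,
      (G.induce Su).Reachable ⟨p, hpSu⟩ ⟨w, hw⟩ → T.Adj r w := by
  subst hSu
  have hrv : r ≠ v := by
    rintro rfl
    exact hp (.inr (.inr (.inr (hle hpr).symm)))
  intro w hw hreach
  refine hreach.induction_of_adj (P := fun x ↦ T.Adj r x.1) ?_ hpr.symm
  intro x y hxy hrx
  refine hT.adj_of_dist_le_three hadj hru.symm hrx hrv x.2.1 ?_ ?_ (hcenter y)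
  · exact hT.connected.one_lt_dist_of_ne_of_not_adj (Ne.symm y.2.1) fun h ↦ y.2.2 (hle h)
  · simpa [SimpleGraph.dist_eq_one_iff_adj.mpr (SimpleGraph.induce_adj.mp hxy)] using hspan x y

/-- In a `uv`-concentrated tree 3-spanner, if a component of `G \ N_G[u,v]` contains a vertex
`p` at `T`-distance 2 from `u` with `T`-neighbor `r` (so `r` is `T`-adjacent to `u`), then every
vertex of the component `Q^u` of `G \ N_G[u]` containing `p` is `T`-adjacent to `r`. -/
theorem stmt_7 {V : Type*} [Fintype V] (G T : SimpleGraph V) (u v p r : V)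
    (hle : T ≤ G) (hT : T.IsTree)
    (hspan : ∀ x y : V, T.dist x y ≤ 3 * G.dist x y)
    (hadj : T.Adj u v)
    (hcenter : ∀ w : V, T.dist u w ≤ 2 ∨ T.dist v w ≤ 2)
    (hconc_u : ∀ w : V, G.Adj u w → T.dist w u < T.dist w v → T.Adj u w)
    (hconc_v : ∀ w : V, G.Adj v w → T.dist w v < T.dist w u → T.Adj v w)
    (hp : ¬ (p = u ∨ p = v ∨ G.Adj u p ∨ G.Adj v p))
    (hdist : T.dist u p = 2) (hpr : T.Adj p r) (hru : T.Adj r u)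
    (Su : Set V) (hSu : Su = {w | w ≠ u ∧ ¬ G.Adj u w}) (hpSu : p ∈ Su) :
    ∀ w : V, ∀ hw : w ∈ Su,
      (G.induce Su).Reachable ⟨p, hpSu⟩ ⟨w, hw⟩ → T.Adj r w :=
  stmt_7_general G T u v p r hle hT hspan hadj hcenter hp hpr hru Su hSu hpSu
end

section
/- Let T be a tree 3-spanner of a finite simple graph G with 5-center {u,v}, and let w be a G-neighbor of u that is strictly closer in T to u than to v and is not T-adjacent to u. Then w is a leaf of T, and if q denotes the T-neighbor of w, the tree T' obtained from T by deleting edge wq and adding edge wu is again a tree 3-spanner of G with 5-center {u,v}. -/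
/-!
Since `w` is not `T`-adjacent to `u` but is closer to `u` than to `v`, the 5-center condition
forces `d_T(u, w) = 2`; let `q` be the middle vertex. A second `T`-neighbour `x` of `w` would be
at distance 3 from `u` and hence 4 from `v`, so `w` is a leaf hanging at `q`. Moving this leaf
to `u` yields a tree `T'` in which distances avoiding `w` do not grow and
`d_T'(w, y) ≤ d_T(u, y) + 1`. Every `G`-neighbour `y` of `w` has `d_T(u, y) ≤ 2`: otherwise
`v` and `q` would both be the first step of the `T`-path from `u` to `y`. Following a shortest
`G`-path `w, y₁, …, y` then gives `d_T(u, y) + 1 ≤ 3 + 3 d_G(y₁, y) = 3 d_G(w, y)`.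
-/

namespace SimpleGraph

variable {V : Type*} {G H : SimpleGraph V}

lemma exists_adj_adj_of_dist_eq_two {x y : V} (h : G.dist x y = 2) :
    ∃ z, G.Adj x z ∧ G.Adj z y := by
  have hreach : G.Reachable x y := Reachable.of_dist_ne_zero (by omega)
  obtain ⟨-, -, z, hz⟩ := edist_eq_two_iff.mp (by rw [← hreach.coe_dist_eq_edist, h]; rfl)
  rw [mem_commonNeighbors] at hz
  exact ⟨z, hz.1, hz.2.symm⟩

lemma Connected.exists_adj_dist_add_one_eq (hG : G.Connected) {x y : V} (hxy : x ≠ y) :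
    ∃ z, G.Adj x z ∧ G.dist z y + 1 = G.dist x y := by
  obtain ⟨p, hp⟩ := hG.exists_walk_length_eq_dist x y
  cases p with
  | nil => exact absurd rfl hxy
  | @cons _ z _ hxz p =>
    refine ⟨z, hxz, le_antisymm ?_ ?_⟩
    · have := dist_le p
      rw [Walk.length_cons] at hp
      omega
    · have := hG.dist_triangle (u := x) (v := z) (w := y)
      have := (dist_eq_one_iff_adj.mpr hxz).le
      omega

lemma IsAcyclic.eq_penultimate_of_dist_lt (hG : G.IsAcyclic) {y a b : V} {p : G.Walk y a}
    (hp : p.IsPath) (hab : G.Adj a b) (hlt : G.dist y b < G.dist y a) : b = p.penultimate := by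
  classical
  obtain ⟨r, hr, hrl⟩ := (p.reachable.trans hab.reachable).exists_path_of_dist
  have ha : a ∉ r.support := fun ha ↦ by
    have := dist_le (r.takeUntil a ha)
    have := r.length_takeUntil_le_length ha
    omega
  exact hG.eq_penultimate_of_adj_end hp hab
    (hG.mem_support_of_ne_mem_support_of_adj_of_isPath hp hr hab ha)

lemma IsTree.eq_of_adj_of_dist_lt_s9 (hG : G.IsTree) {y a b c : V} (hab : G.Adj a b)
    (hac : G.Adj a c) (hb : G.dist y b < G.dist y a) (hc : G.dist y c < G.dist y a) :
    b = c := by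
  obtain ⟨p, hp, -⟩ := hG.connected.exists_path_of_dist y a
  exact (hG.isAcyclic.eq_penultimate_of_dist_lt hp hab hb).trans
    (hG.isAcyclic.eq_penultimate_of_dist_lt hp hac hc).symm

section Leaf

variable {w q : V}

lemma Walk.mem_edges_of_leaf (hleaf : ∀ x, H.Adj w x → x = q) {y : V} (p : H.Walk w y)
    (hy : w ≠ y) : s(w, q) ∈ p.edges := by
  cases p with
  | nil => exact absurd rfl hy
  | cons h p => obtain rfl := hleaf _ h; exact List.mem_cons_self

lemma Walk.IsTrail.notMem_support_of_leaf [DecidableEq V] (hleaf : ∀ x, H.Adj w x → x = q)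
    {a b : V} {p : H.Walk a b} (hp : p.IsTrail) (ha : a ≠ w) (hb : b ≠ w) :
    w ∉ p.support := by
  intro hw
  have hin : s(w, q) ∈ (p.dropUntil w hw).edges :=
    (p.dropUntil w hw).mem_edges_of_leaf hleaf hb.symm
  have hout : s(w, q) ∈ (p.takeUntil w hw).edges := by
    simpa using (p.takeUntil w hw).reverse.mem_edges_of_leaf hleaf ha.symm
  have hnd := hp.edges_nodup
  rw [← p.take_spec hw, Walk.edges_append] at hnd
  exact List.disjoint_of_nodup_append hnd hout hin

lemma exists_walk_deleteEdges_leaf (hH : H.Connected) (hleaf : ∀ x, H.Adj w x → x = q)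
    {x y : V} (hx : x ≠ w) (hy : y ≠ w) :
    ∃ p : (H.deleteEdges {s(w, q)}).Walk x y, p.length = H.dist x y := by
  classical
  obtain ⟨p, hp, hpl⟩ := hH.exists_path_of_dist x y
  have hw := hp.isTrail.notMem_support_of_leaf hleaf hx hy
  exact ⟨p.toDeleteEdge _ fun he ↦ hw (p.fst_mem_support_of_mem_edges he), by simpa using hpl⟩

lemma not_reachable_deleteEdges_leaf (hleaf : ∀ x, H.Adj w x → x = q) {u : V} (hwu : w ≠ u) :
    ¬ (H.deleteEdges {s(w, q)}).Reachable w u := by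
  rintro ⟨p⟩
  cases p with
  | nil => exact hwu rfl
  | cons h _ =>
    rw [deleteEdges_adj] at h
    exact h.2 (by rw [hleaf _ h.1]; rfl)

end Leaf

/-- In the main theorem `T.moveLeaf w q u` appears unfolded, with `edge w u` written as
`fromEdgeSet {s(w, u)}`. -/
def moveLeaf (H : SimpleGraph V) (w q u : V) : SimpleGraph V :=
  H.deleteEdges {s(w, q)} ⊔ edge w u

section MoveLeaf

variable {w q u : V}

lemma moveLeaf_le (hH : H ≤ G) (hwu : G.Adj w u) : H.moveLeaf w q u ≤ G :=
  sup_le ((deleteEdges_le _).trans hH) ((edge_le_iff _).mpr (.inr hwu))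

lemma deleteEdges_le_moveLeaf : H.deleteEdges {s(w, q)} ≤ H.moveLeaf w q u := le_sup_left

lemma moveLeaf_adj_of_ne {x y : V} (h : H.Adj x y) (hx : x ≠ w) (hy : y ≠ w) :
    (H.moveLeaf w q u).Adj x y := by
  refine deleteEdges_le_moveLeaf ((deleteEdges_adj ..).mpr ⟨h, fun he ↦ ?_⟩)
  rcases Sym2.eq_iff.mp (Set.mem_singleton_iff.mp he) with ⟨rfl, -⟩ | ⟨-, rfl⟩
  exacts [hx rfl, hy rfl]

lemma moveLeaf_adj_leaf (hwu : w ≠ u) : (H.moveLeaf w q u).Adj w u :=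
  Or.inr ((edge_adj _ _ _ _).mpr ⟨Or.inl ⟨rfl, rfl⟩, hwu⟩)

lemma dist_moveLeaf_le (hH : H.Connected) (hleaf : ∀ x, H.Adj w x → x = q) {x y : V}
    (hx : x ≠ w) (hy : y ≠ w) : (H.moveLeaf w q u).dist x y ≤ H.dist x y := by
  obtain ⟨p, hp⟩ := exists_walk_deleteEdges_leaf hH hleaf hx hy
  simpa [hp] using dist_le (p.mapLe deleteEdges_le_moveLeaf)

lemma dist_moveLeaf_leaf_le (hH : H.Connected) (hleaf : ∀ x, H.Adj w x → x = q)
    (hwu : w ≠ u) {y : V} (hy : y ≠ w) : (H.moveLeaf w q u).dist w y ≤ H.dist u y + 1 := by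
  obtain ⟨p, hp⟩ := exists_walk_deleteEdges_leaf hH hleaf hwu.symm hy
  simpa [hp] using dist_le (.cons (moveLeaf_adj_leaf hwu) (p.mapLe deleteEdges_le_moveLeaf))

lemma IsTree.moveLeaf (hH : H.IsTree) (hleaf : ∀ x, H.Adj w x → x = q) (hwu : w ≠ u) :
    (H.moveLeaf w q u).IsTree where
  connected := by
    have hreach : ∀ x, (H.moveLeaf w q u).Reachable x u := fun x ↦ by
      by_cases hx : x = w
      · rw [hx]; exact (moveLeaf_adj_leaf hwu).reachable
      · obtain ⟨p, -⟩ := exists_walk_deleteEdges_leaf hH.connected hleaf hx hwu.symm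
        exact ⟨p.mapLe deleteEdges_le_moveLeaf⟩
    exact (connected_iff_exists_forall_reachable _).mpr ⟨u, fun x ↦ (hreach x).symm⟩
  isAcyclic := (hH.isAcyclic.anti (deleteEdges_le _)).sup_edge_of_not_reachable
    (not_reachable_deleteEdges_leaf hleaf hwu)

lemma moveLeaf_dist_le_mul (hH : H.Connected) (hleaf : ∀ x, H.Adj w x → x = q) (hwu : w ≠ u)
    {k : ℕ} (hspan : ∀ x y, H.dist x y ≤ k * G.dist x y)
    (hleafspan : ∀ y, y ≠ w → H.dist u y + 1 ≤ k * G.dist w y) (x y : V) :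
    (H.moveLeaf w q u).dist x y ≤ k * G.dist x y := by
  have hw : ∀ y, (H.moveLeaf w q u).dist w y ≤ k * G.dist w y := fun y ↦ by
    by_cases hy : y = w
    · simp [hy]
    · exact (dist_moveLeaf_leaf_le hH hleaf hwu hy).trans (hleafspan y hy)
  by_cases hx : x = w
  · exact hx ▸ hw y
  by_cases hy : y = w
  · rw [hy, dist_comm, G.dist_comm]; exact hw x
  exact (dist_moveLeaf_le hH hleaf hx hy).trans (hspan x y)

lemma moveLeaf_dist_le_two_or (hH : H.Connected) (hleaf : ∀ x, H.Adj w x → x = q)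
    (hwu : w ≠ u) {v : V} (hwv : w ≠ v) (hcenter : ∀ z, H.dist u z ≤ 2 ∨ H.dist v z ≤ 2)
    (z : V) : (H.moveLeaf w q u).dist u z ≤ 2 ∨ (H.moveLeaf w q u).dist v z ≤ 2 := by
  by_cases hz : z = w
  · left
    rw [hz, dist_comm, dist_eq_one_iff_adj.mpr (moveLeaf_adj_leaf hwu)]
    omega
  · exact (hcenter z).imp (le_trans (dist_moveLeaf_le hH hleaf hwu.symm hz))
      (le_trans (dist_moveLeaf_le hH hleaf hwv.symm hz))

end MoveLeaf

section FiveCenter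

variable {T : SimpleGraph V} {u v w q : V}

lemma dist_eq_two_of_center (hT : T.Connected)
    (hcenter : ∀ z, T.dist u z ≤ 2 ∨ T.dist v z ≤ 2) (hwu : w ≠ u) (hna : ¬ T.Adj u w)
    (hclose : T.dist w u < T.dist w v) : T.dist u w = 2 := by
  have hpos := hT.pos_dist_of_ne hwu.symm
  have hne : T.dist u w ≠ 1 := fun h ↦ hna (dist_eq_one_iff_adj.mp h)
  rw [dist_comm, T.dist_comm (u := w)] at hclose
  rcases hcenter w with h | h <;> omega

lemma IsTree.leaf_of_center (hT : T.IsTree) (hcenter : ∀ z, T.dist u z ≤ 2 ∨ T.dist v z ≤ 2)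
    (huv : T.Adj u v) (huq : T.Adj u q) (hqw : T.Adj q w) (hvq : v ≠ q) (huw : T.dist u w = 2)
    (x : V) (hwx : T.Adj w x) : x = q := by
  by_contra hxq
  have huq' := dist_eq_one_iff_adj.mpr huq
  have hux : T.dist u x = 3 := by
    rcases hT.dist_eq_dist_add_one_of_adj u hwx with h | h
    · exact absurd (hT.eq_of_adj_of_dist_lt_s9 (y := u) hwx hqw.symm (by omega) (by omega)) hxq
    · omega
  have hvx : T.dist v x ≤ 2 := (hcenter x).resolve_left (by omega)
  have hqx : T.dist q x ≤ 2 := by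
    have := hT.connected.dist_triangle (u := q) (v := w) (w := x)
    rw [dist_eq_one_iff_adj.mpr hqw, dist_eq_one_iff_adj.mpr hwx] at this
    exact this
  refine hvq (hT.eq_of_adj_of_dist_lt_s9 (y := x) huv huq ?_ ?_) <;>
    rw [dist_comm, T.dist_comm (u := x)] <;> omega

lemma IsTree.dist_le_two_of_center (hT : T.IsTree)
    (hcenter : ∀ z, T.dist u z ≤ 2 ∨ T.dist v z ≤ 2) (huv : T.Adj u v) (huq : T.Adj u q)
    (hvq : v ≠ q) (hleaf : ∀ x, T.Adj w x → x = q) {y : V} (hwy : w ≠ y)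
    (hwy3 : T.dist w y ≤ 3) : T.dist u y ≤ 2 := by
  by_contra! h
  obtain ⟨z, hwz, hz⟩ := hT.connected.exists_adj_dist_add_one_eq hwy
  obtain rfl := hleaf z hwz
  have hvy : T.dist v y ≤ 2 := (hcenter y).resolve_left (by omega)
  refine hvq (hT.eq_of_adj_of_dist_lt_s9 (y := y) huv huq ?_ ?_) <;>
    rw [dist_comm, T.dist_comm (u := y)] <;> omega

lemma dist_add_one_le_of_spanner (hT : T.Connected) (hG : G.Connected)
    (hspan : ∀ x y, T.dist x y ≤ 3 * G.dist x y) (hnbr : ∀ y, G.Adj w y → T.dist u y ≤ 2)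
    {y : V} (hwy : w ≠ y) : T.dist u y + 1 ≤ 3 * G.dist w y := by
  obtain ⟨z, hwz, hz⟩ := hG.exists_adj_dist_add_one_eq hwy
  have := hT.dist_triangle (u := u) (v := z) (w := y)
  have := hspan z y
  have := hnbr z hwz
  omega

end FiveCenter

end SimpleGraph

open SimpleGraph in
theorem stmt_9_general {V : Type*} (G T : SimpleGraph V) (u v w : V)
    (hle : T ≤ G) (hT : T.IsTree)
    (hspan : ∀ x y : V, T.dist x y ≤ 3 * G.dist x y)
    (hadj : T.Adj u v)
    (hcenter : ∀ z : V, T.dist u z ≤ 2 ∨ T.dist v z ≤ 2)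
    (hw : G.Adj u w) (hclose : T.dist w u < T.dist w v) (hna : ¬ T.Adj u w) :
    (∃! q : V, T.Adj w q) ∧
    ∀ q : V, T.Adj w q →
      ∀ T' : SimpleGraph V,
        T' = T.deleteEdges {s(w, q)} ⊔ SimpleGraph.fromEdgeSet {s(w, u)} →
        T' ≤ G ∧ T'.IsTree ∧ (∀ x y : V, T'.dist x y ≤ 3 * G.dist x y) ∧
          T'.Adj u v ∧ (∀ z : V, T'.dist u z ≤ 2 ∨ T'.dist v z ≤ 2) := by
  have hwu : w ≠ u := hw.ne'
  have huw := dist_eq_two_of_center hT.connected hcenter hwu hna hclose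
  obtain ⟨q, huq, hqw⟩ := exists_adj_adj_of_dist_eq_two huw
  have hwv : w ≠ v := by rintro rfl; rw [dist_self] at hclose; omega
  have hvq : v ≠ q := by
    rintro rfl
    rw [T.dist_comm, huw, dist_comm, dist_eq_one_iff_adj.mpr hqw] at hclose
    omega
  have hleaf := hT.leaf_of_center hcenter hadj huq hqw hvq huw
  refine ⟨⟨q, hqw.symm, hleaf⟩, fun q' hq' T' hT' ↦ ?_⟩
  obtain rfl := hleaf q' hq'
  have hnbr (y : V) (hy : G.Adj w y) : T.dist u y ≤ 2 :=
    hT.dist_le_two_of_center hcenter hadj huq hvq hleaf hy.ne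
      (by simpa [dist_eq_one_iff_adj.mpr hy] using hspan w y)
  have hGc : G.Connected := hT.connected.mono hle
  subst hT'
  exact ⟨moveLeaf_le hle hw.symm, hT.moveLeaf hleaf hwu,
    moveLeaf_dist_le_mul hT.connected hleaf hwu hspan
      (fun y hy ↦ dist_add_one_le_of_spanner hT.connected hGc hspan hnbr (Ne.symm hy)),
    moveLeaf_adj_of_ne hadj hwu.symm hwv.symm,
    moveLeaf_dist_le_two_or hT.connected hleaf hwu hwv hcenter⟩

/-- If `w` is a `G`-neighbor of `u` strictly closer in `T` to `u` than to `v` but not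
`T`-adjacent to `u`, then `w` is a leaf of `T`, and replacing the pendant edge `wq` by `wu`
yields again a tree 3-spanner of `G` with 5-center `{u,v}`. -/
theorem stmt_9 {V : Type*} [Fintype V] (G T : SimpleGraph V) (u v w : V)
    (hle : T ≤ G) (hT : T.IsTree)
    (hspan : ∀ x y : V, T.dist x y ≤ 3 * G.dist x y)
    (hadj : T.Adj u v)
    (hcenter : ∀ z : V, T.dist u z ≤ 2 ∨ T.dist v z ≤ 2)
    (hw : G.Adj u w) (hclose : T.dist w u < T.dist w v) (hna : ¬ T.Adj u w) :
    (∃! q : V, T.Adj w q) ∧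
    ∀ q : V, T.Adj w q →
      ∀ T' : SimpleGraph V,
        T' = T.deleteEdges {s(w, q)} ⊔ SimpleGraph.fromEdgeSet {s(w, u)} →
        T' ≤ G ∧ T'.IsTree ∧ (∀ x y : V, T'.dist x y ≤ 3 * G.dist x y) ∧
          T'.Adj u v ∧ (∀ z : V, T'.dist u z ≤ 2 ∨ T'.dist v z ≤ 2) :=
  stmt_9_general G T u v w hle hT hspan hadj hcenter hw hclose hna
end

section
/- A finite simple graph G admits a tree 3-spanner if and only if every block of G admits a tree 3-spanner. -/
/-!
A cut vertex `v` splits the vertex set into two sides `A`, `B` with `A ∩ B = {v}` and no edge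
between `A \ B` and `B \ A`. In `G`, and in every subgraph of `G`, a path between two vertices of
one side stays in that side, and a walk from one side to the other passes through `v`; so distances
between the sides add up at `v`. Hence a tree `t`-spanner of `G` restricts to tree `t`-spanners of
`G[A]` and `G[B]`, and conversely the union of tree `t`-spanners of `G[A]` and `G[B]` is one of
`G`. The blocks of `G` are exactly the blocks of `G[A]` and of `G[B]`, so induction on the number
of vertices reduces the theorem to graphs without a cut vertex, whose only block is everything.
-/

open Set

namespace SimpleGraph

variable {V W : Type*} {G : SimpleGraph V} {G' : SimpleGraph W}

def HasTreeSpanner (t : ℕ) (G : SimpleGraph V) : Prop :=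
  ∃ T ≤ G, T.IsTree ∧ ∀ x y, T.dist x y ≤ t * G.dist x y

def NoCutVertex (G : SimpleGraph V) : Prop :=
  ∀ v x y : V, x ≠ v → y ≠ v → ∃ p : G.Walk x y, v ∉ p.support

def Nonseparable (G : SimpleGraph V) : Prop :=
  G.Connected ∧ G.NoCutVertex

def IsBlock (G : SimpleGraph V) (B : Set V) : Prop :=
  (G.induce B).Connected ∧ (G.induce B).NoCutVertex ∧
    ∀ B', B ⊆ B' → (G.induce B').Nonseparable → B' = B

lemma Hom.dist_le (f : G →g G') {u v : V} (h : G.Reachable u v) :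
    G'.dist (f u) (f v) ≤ G.dist u v := by
  obtain ⟨w, hw⟩ := h.exists_walk_length_eq_dist
  calc G'.dist (f u) (f v) ≤ (w.map f).length := SimpleGraph.dist_le _
    _ = G.dist u v := by rw [Walk.length_map, hw]

lemma Iso.dist_eq (e : G ≃g G') (u v : V) : G'.dist (e u) (e v) = G.dist u v := by
  by_cases h : G.Reachable u v
  · refine le_antisymm (e.toHom.dist_le h) ?_
    simpa using e.symm.toHom.dist_le (u := e u) (v := e v) (Iso.reachable_iff.2 h)
  · rw [dist_eq_zero_of_not_reachable h,
      dist_eq_zero_of_not_reachable (mt Iso.reachable_iff.1 h)]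

lemma Iso.noCutVertex (e : G ≃g G') (h : G.NoCutVertex) : G'.NoCutVertex := by
  intro v x y hx hy
  obtain ⟨p, hp⟩ := h (e.symm v) (e.symm x) (e.symm y) (e.symm.injective.ne hx)
    (e.symm.injective.ne hy)
  refine ⟨(p.map e.toHom).copy (by simp) (by simp), fun hv => ?_⟩
  rw [Walk.support_copy, Walk.support_map] at hv
  obtain ⟨u, hu, rfl⟩ := List.mem_map.1 hv
  exact hp (by simpa using hu)

lemma Iso.nonseparable (e : G ≃g G') (h : G.Nonseparable) : G'.Nonseparable :=
  ⟨e.connected_iff.1 h.1, e.noCutVertex h.2⟩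

lemma Iso.hasTreeSpanner (e : G ≃g G') {t : ℕ} (h : G.HasTreeSpanner t) :
    G'.HasTreeSpanner t := by
  obtain ⟨T, hTG, hT, hdist⟩ := h
  let eT := Iso.map e.toEquiv T
  refine ⟨_, ?_, eT.isTree_iff.1 hT, fun x y => ?_⟩
  · rintro _ _ ⟨-, a, b, hab, rfl, rfl⟩
    exact e.map_adj_iff.2 (hTG hab)
  · obtain ⟨a, rfl⟩ := e.surjective x
    obtain ⟨b, rfl⟩ := e.surjective y
    calc (T.map e.toEquiv).dist (e a) (e b) = T.dist a b := eT.dist_eq a b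
      _ ≤ t * G.dist a b := hdist a b
      _ = t * G'.dist (e a) (e b) := by rw [e.dist_eq]

noncomputable def induceInduceIso (G : SimpleGraph V) (A : Set V) (s : Set A) :
    (G.induce A).induce s ≃g G.induce (Subtype.val '' s) where
  toEquiv := Equiv.Set.image Subtype.val s Subtype.val_injective
  map_rel_iff' := by simp [Equiv.Set.image, Equiv.Set.imageOfInjOn]

lemma nonseparable_induce_pair {a b : V} (h : G.Adj a b) :
    (G.induce {a, b}).Nonseparable := by
  refine ⟨induce_pair_connected_of_adj h, fun z x y hx hy => ?_⟩
  obtain rfl : x = y := by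
    obtain ⟨x, rfl | rfl⟩ := x <;> obtain ⟨y, rfl | rfl⟩ := y <;>
      obtain ⟨z, rfl | rfl⟩ := z <;> simp_all
  exact ⟨.nil, by simpa using hx.symm⟩

lemma IsBlock.nonseparable {B : Set V} (hB : G.IsBlock B) : (G.induce B).Nonseparable :=
  ⟨hB.1, hB.2.1⟩

lemma IsBlock.exists_mem_ne [Nontrivial V] (hG : G.Preconnected) {B : Set V} (hB : G.IsBlock B)
    (v : V) : ∃ c ∈ B, c ≠ v := by
  by_contra! hBv
  obtain ⟨⟨a, ha⟩⟩ := hB.1.nonempty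
  obtain ⟨b, hab⟩ := hG.exists_adj_of_nontrivial a
  have hB_sub : B ⊆ {a, b} := fun c hc => Or.inl ((hBv c hc).trans (hBv a ha).symm)
  have hb : b ∈ B := hB.2.2 _ hB_sub (nonseparable_induce_pair hab) ▸ Or.inr rfl
  exact hab.ne ((hBv a ha).trans (hBv b hb).symm)

lemma isBlock_univ (hG : G.Nonseparable) : G.IsBlock univ :=
  ⟨((induceUnivIso G).symm.nonseparable hG).1, ((induceUnivIso G).symm.nonseparable hG).2,
    fun _ h _ => univ_subset_iff.1 h⟩

lemma IsBlock.eq_univ (hG : G.Nonseparable) {B : Set V} (hB : G.IsBlock B) : B = univ :=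
  (hB.2.2 univ (subset_univ B) (isBlock_univ hG).nonseparable).symm

lemma induce_sup_spanningCoe {A B : Set V} (h : (A ∩ B).Subsingleton) (TA : SimpleGraph A)
    (TB : SimpleGraph B) : (TA.spanningCoe ⊔ TB.spanningCoe).induce A = TA := by
  ext ⟨a, ha⟩ ⟨b, hb⟩
  simp only [comap_adj, Function.Embedding.subtype_apply, sup_adj, map_adj]
  constructor
  · rintro (⟨a', b', hab, rfl, rfl⟩ | ⟨a', b', hab, rfl, rfl⟩)
    · exact hab
    · exact absurd (Subtype.ext (h ⟨ha, a'.2⟩ ⟨hb, b'.2⟩)) hab.ne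
  · exact fun hab => Or.inl ⟨_, _, hab, rfl, rfl⟩

structure IsSeparation (G : SimpleGraph V) (v : V) (A B : Set V) : Prop where
  union_eq : A ∪ B = univ
  inter_eq : A ∩ B = {v}
  not_adj : ∀ ⦃a b⦄, a ∉ B → b ∉ A → ¬G.Adj a b
  nonempty_diff_left : (A \ B).Nonempty
  nonempty_diff_right : (B \ A).Nonempty

namespace IsSeparation

variable {v p q : V} {A B : Set V}

lemma symm (hS : G.IsSeparation v A B) : G.IsSeparation v B A :=
  ⟨union_comm A B ▸ hS.union_eq, inter_comm A B ▸ hS.inter_eq,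
    fun _ _ ha hb hab => hS.not_adj hb ha hab.symm, hS.nonempty_diff_right, hS.nonempty_diff_left⟩

lemma mono {H : SimpleGraph V} (hS : G.IsSeparation v A B) (hHG : H ≤ G) :
    H.IsSeparation v A B :=
  { hS with not_adj := fun _ _ ha hb hab => hS.not_adj ha hb (hHG hab) }

lemma mem_left (hS : G.IsSeparation v A B) : v ∈ A :=
  (hS.inter_eq.symm ▸ mem_singleton v : v ∈ A ∩ B).1

lemma mem_right (hS : G.IsSeparation v A B) : v ∈ B := hS.symm.mem_left

lemma mem_left_of_not_mem_right (hS : G.IsSeparation v A B) (hp : p ∉ B) : p ∈ A :=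
  (hS.union_eq.symm ▸ mem_univ p : p ∈ A ∪ B).resolve_right hp

lemma eq_of_mem_of_mem (hS : G.IsSeparation v A B) (hA : p ∈ A) (hB : p ∈ B) : p = v :=
  (hS.inter_eq ▸ ⟨hA, hB⟩ : p ∈ ({v} : Set V))

lemma mem_support_of_mem_of_not_mem (hS : G.IsSeparation v A B) (w : G.Walk p q) (hp : p ∈ A)
    (hq : q ∉ A) : v ∈ w.support := by
  induction w with
  | nil => exact absurd hp hq
  | @cons p c q hpc w ih =>
    by_cases hpv : p = v
    · subst hpv
      exact Walk.start_mem_support _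
    have hpB : p ∉ B := fun hpB => hpv (hS.eq_of_mem_of_mem hp hpB)
    have hcA : c ∈ A := by_contra fun hcA => hS.not_adj hpB hcA hpc
    exact List.mem_cons_of_mem _ (ih hcA hq)

lemma support_subset_of_isPath (hS : G.IsSeparation v A B) {w : G.Walk p q} (hw : w.IsPath)
    (hp : p ∈ A) (hq : q ∈ A) : ∀ u ∈ w.support, u ∈ A := by
  intro u hu
  by_contra huA
  obtain ⟨w₁, w₂, -, -, rfl⟩ := hw.mem_support_iff_exists_append.1 hu
  have h₁ := hS.mem_support_of_mem_of_not_mem w₁ hp huA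
  have h₂ := hS.mem_support_of_mem_of_not_mem w₂.reverse hq huA
  rw [Walk.support_reverse, List.mem_reverse] at h₂
  exact hw.ne_of_mem_support_of_append (ne_of_mem_of_not_mem hS.mem_left huA) h₁ h₂ rfl

/-- Rotating the cycle to start at a vertex of `A \ B` and splitting it at a vertex of `B \ A`
gives two arcs that both pass through `v`, which a cycle cannot do. -/
lemma support_subset_or_of_isCycle (hS : G.IsSeparation v A B) {u : V} {c : G.Walk u u}
    (hc : c.IsCycle) : (∀ x ∈ c.support, x ∈ A) ∨ (∀ x ∈ c.support, x ∈ B) := by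
  classical
  by_contra! h
  obtain ⟨⟨b, hbc, hbA⟩, ⟨a, hac, haB⟩⟩ := h
  set c' := c.rotate a hac
  have hb : b ∈ c'.support := (Walk.mem_support_rotate_iff c a hac).2 hbc
  have h₁ : v ∈ (c'.takeUntil b hb).support :=
    hS.mem_support_of_mem_of_not_mem _ (hS.mem_left_of_not_mem_right haB) hbA
  have h₂ : v ∈ (c'.dropUntil b hb).support.tail :=
    ((Walk.mem_support_iff _).1 (hS.symm.mem_support_of_mem_of_not_mem _
      (hS.symm.mem_left_of_not_mem_right hbA) haB)).resolve_left
      (ne_of_mem_of_not_mem hS.mem_left hbA)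
  have hsplit : c'.support = (c'.takeUntil b hb).support ++ (c'.dropUntil b hb).support.tail := by
    rw [← Walk.support_append, Walk.take_spec]
  have hcount := (hc.rotate hac).count_support_of_mem (u := v)
    (hsplit ▸ List.mem_append_left _ h₁)
    (ne_of_mem_of_not_mem hS.mem_right haB)
  rw [hsplit, List.count_append] at hcount
  have := List.count_pos_iff.2 h₁
  have := List.count_pos_iff.2 h₂
  omega

lemma connected_induce_left (hS : G.IsSeparation v A B) (hG : G.Connected) :
    (G.induce A).Connected := by
  have : Nonempty A := ⟨⟨v, hS.mem_left⟩⟩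
  refine ⟨fun p q => ?_⟩
  obtain ⟨w, hw, -⟩ := hG.exists_path_of_dist p q
  exact ⟨w.induce A (hS.support_subset_of_isPath hw p.2 q.2)⟩

lemma dist_induce_left (hS : G.IsSeparation v A B) (hG : G.Connected) (p q : A) :
    (G.induce A).dist p q = G.dist p q := by
  obtain ⟨w, hw, hlen⟩ := hG.exists_path_of_dist p q
  have hsub := hS.support_subset_of_isPath hw p.2 q.2
  have hlen' : (w.induce A hsub).length = w.length := by
    have := congrArg Walk.length (w.map_induce hsub)
    rwa [Walk.length_map] at this
  refine le_antisymm ((dist_le _).trans (hlen'.trans hlen).le) ?_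
  exact (Embedding.induce A).toHom.dist_le ⟨w.induce A hsub⟩

lemma dist_eq_add (hS : G.IsSeparation v A B) (hG : G.Connected) (hp : p ∈ A) (hq : q ∉ A) :
    G.dist p q = G.dist p v + G.dist v q := by
  classical
  refine le_antisymm hG.dist_triangle ?_
  obtain ⟨w, hw⟩ := hG.exists_walk_length_eq_dist p q
  have hv := hS.mem_support_of_mem_of_not_mem w hp hq
  calc G.dist p v + G.dist v q ≤ (w.takeUntil v hv).length + (w.dropUntil v hv).length :=
        add_le_add (dist_le _) (dist_le _)
    _ = G.dist p q := by rw [← Walk.length_append, Walk.take_spec, hw]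

lemma connected_of_induce (hS : G.IsSeparation v A B) (hA : (G.induce A).Connected)
    (hB : (G.induce B).Connected) : G.Connected := by
  have hv : ∀ u, G.Reachable u v := fun u => by
    rcases (hS.union_eq.symm ▸ mem_univ u : u ∈ A ∪ B) with hu | hu
    · exact (hA.preconnected ⟨u, hu⟩ ⟨v, hS.mem_left⟩).map (Embedding.induce A).toHom
    · exact (hB.preconnected ⟨u, hu⟩ ⟨v, hS.mem_right⟩).map (Embedding.induce B).toHom
  have : Nonempty V := ⟨v⟩
  exact ⟨fun x y => (hv x).trans (hv y).symm⟩

lemma isAcyclic_of_induce (hS : G.IsSeparation v A B) (hA : (G.induce A).IsAcyclic)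
    (hB : (G.induce B).IsAcyclic) : G.IsAcyclic := by
  intro u c hc
  rcases hS.support_subset_or_of_isCycle hc with h | h
  · refine hA (c.induce A h)
      ((Walk.isCycle_map_iff_of_injective (f := (Embedding.induce A).toHom)
        Subtype.val_injective).1 ?_)
    rwa [Walk.map_induce]
  · refine hB (c.induce B h)
      ((Walk.isCycle_map_iff_of_injective (f := (Embedding.induce B).toHom)
        Subtype.val_injective).1 ?_)
    rwa [Walk.map_induce]

lemma dist_le_mul_of_mem_of_not_mem (hS : G.IsSeparation v A B) (hG : G.Connected)
    {H : SimpleGraph V} (hH : H.Connected) {t : ℕ}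
    (hA : ∀ x ∈ A, ∀ y ∈ A, H.dist x y ≤ t * G.dist x y)
    (hB : ∀ x ∈ B, ∀ y ∈ B, H.dist x y ≤ t * G.dist x y) (hp : p ∈ A) (hq : q ∉ A) :
    H.dist p q ≤ t * G.dist p q :=
  calc H.dist p q ≤ H.dist p v + H.dist v q := hH.dist_triangle
    _ ≤ t * G.dist p v + t * G.dist v q :=
      add_le_add (hA p hp v hS.mem_left)
        (hB v hS.mem_right q (hS.symm.mem_left_of_not_mem_right hq))
    _ = t * G.dist p q := by rw [hS.dist_eq_add hG hp hq, mul_add]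

lemma dist_le_mul (hS : G.IsSeparation v A B) (hG : G.Connected) {H : SimpleGraph V}
    (hH : H.Connected) {t : ℕ} (hA : ∀ x ∈ A, ∀ y ∈ A, H.dist x y ≤ t * G.dist x y)
    (hB : ∀ x ∈ B, ∀ y ∈ B, H.dist x y ≤ t * G.dist x y) (x y : V) :
    H.dist x y ≤ t * G.dist x y := by
  by_cases hx : x ∈ A
  · by_cases hy : y ∈ A
    · exact hA x hx y hy
    · exact hS.dist_le_mul_of_mem_of_not_mem hG hH hA hB hx hy
  · have hx : x ∈ B := hS.symm.mem_left_of_not_mem_right hx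
    by_cases hy : y ∈ B
    · exact hB x hx y hy
    · exact hS.symm.dist_le_mul_of_mem_of_not_mem hG hH hB hA hx hy

lemma hasTreeSpanner_induce_left (hS : G.IsSeparation v A B) (hG : G.Connected) {t : ℕ}
    (h : G.HasTreeSpanner t) : (G.induce A).HasTreeSpanner t := by
  obtain ⟨T, hTG, hT, hdist⟩ := h
  have hTS := hS.mono hTG
  refine ⟨T.induce A, fun a b hab => hTG hab,
    ⟨hTS.connected_induce_left hT.connected, hT.isAcyclic.induce A⟩, fun p q => ?_⟩
  rw [hTS.dist_induce_left hT.connected, hS.dist_induce_left hG]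
  exact hdist p q

lemma hasTreeSpanner_of_induce (hS : G.IsSeparation v A B) (hG : G.Connected) {t : ℕ}
    (hA : (G.induce A).HasTreeSpanner t) (hB : (G.induce B).HasTreeSpanner t) :
    G.HasTreeSpanner t := by
  obtain ⟨TA, hTAG, hTA, hdA⟩ := hA
  obtain ⟨TB, hTBG, hTB, hdB⟩ := hB
  set T := TA.spanningCoe ⊔ TB.spanningCoe
  have hTG : T ≤ G := sup_le ((map_monotone _ hTAG).trans (spanningCoe_induce_le G A))
    ((map_monotone _ hTBG).trans (spanningCoe_induce_le G B))
  have hTS := hS.mono hTG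
  have hAB : (A ∩ B).Subsingleton := hS.inter_eq ▸ subsingleton_singleton
  have hTA' : T.induce A = TA := induce_sup_spanningCoe hAB TA TB
  have hTB' : T.induce B = TB := by
    rw [show T = TB.spanningCoe ⊔ TA.spanningCoe from sup_comm _ _]
    exact induce_sup_spanningCoe (inter_comm A B ▸ hAB) TB TA
  have hT : T.IsTree :=
    ⟨hTS.connected_of_induce (hTA' ▸ hTA.connected) (hTB' ▸ hTB.connected),
      hTS.isAcyclic_of_induce (hTA' ▸ hTA.isAcyclic) (hTB' ▸ hTB.isAcyclic)⟩
  refine ⟨T, hTG, hT, hS.dist_le_mul hG hT.connected (fun x hx y hy => ?_) fun x hx y hy => ?_⟩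
  · have := hdA ⟨x, hx⟩ ⟨y, hy⟩
    rwa [← hTA', hTS.dist_induce_left hT.connected, hS.dist_induce_left hG] at this
  · have := hdB ⟨x, hx⟩ ⟨y, hy⟩
    rwa [← hTB', hTS.symm.dist_induce_left hT.connected, hS.symm.dist_induce_left hG] at this

lemma hasTreeSpanner_iff (hS : G.IsSeparation v A B) (hG : G.Connected) {t : ℕ} :
    G.HasTreeSpanner t ↔ (G.induce A).HasTreeSpanner t ∧ (G.induce B).HasTreeSpanner t :=
  ⟨fun h => ⟨hS.hasTreeSpanner_induce_left hG h, hS.symm.hasTreeSpanner_induce_left hG h⟩,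
    fun h => hS.hasTreeSpanner_of_induce hG h.1 h.2⟩

lemma card_left_lt [Finite V] (hS : G.IsSeparation v A B) : Nat.card A < Nat.card V :=
  have ⟨_, _, hbA⟩ := hS.nonempty_diff_right
  Finite.card_subtype_lt hbA

lemma nontrivial_left (hS : G.IsSeparation v A B) : Nontrivial A :=
  have ⟨a, haA, haB⟩ := hS.nonempty_diff_left
  nontrivial_of_ne ⟨v, hS.mem_left⟩ ⟨a, haA⟩ fun h =>
    haB (Subtype.mk.inj h ▸ hS.mem_right)

lemma subset_left_of_nonseparable (hS : G.IsSeparation v A B) {C : Set V}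
    (hC : (G.induce C).Nonseparable) {a : V} (ha : a ∈ C) (haB : a ∉ B) : C ⊆ A := by
  intro b hb
  by_contra hbA
  obtain ⟨p, hp⟩ :
      ∃ p : (G.induce C).Walk ⟨a, ha⟩ ⟨b, hb⟩, ∀ u ∈ p.support, (u : V) ≠ v := by
    by_cases hvC : v ∈ C
    · obtain ⟨p, hp⟩ := hC.2 ⟨v, hvC⟩ ⟨a, ha⟩ ⟨b, hb⟩
        (fun h => haB (Subtype.mk.inj h ▸ hS.mem_right))
        (fun h => hbA (Subtype.mk.inj h ▸ hS.mem_left))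
      exact ⟨p, fun u hu huv => hp ((Subtype.ext huv : u = ⟨v, hvC⟩) ▸ hu)⟩
    · obtain ⟨p⟩ := hC.1.preconnected ⟨a, ha⟩ ⟨b, hb⟩
      exact ⟨p, fun u _ huv => hvC (huv ▸ u.2)⟩
  have hv := hS.mem_support_of_mem_of_not_mem (p.map (Embedding.induce C).toHom)
    (hS.mem_left_of_not_mem_right haB) hbA
  rw [Walk.support_map] at hv
  obtain ⟨u, hu, huv⟩ := List.mem_map.1 hv
  exact hp u hu huv

lemma subset_or_subset_of_nonseparable (hS : G.IsSeparation v A B) {C : Set V}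
    (hC : (G.induce C).Nonseparable) : C ⊆ A ∨ C ⊆ B := by
  by_cases h : ∃ a ∈ C, a ∉ B
  · obtain ⟨a, ha, haB⟩ := h
    exact Or.inl (hS.subset_left_of_nonseparable hC ha haB)
  · exact Or.inr fun a ha => by_contra fun haB => h ⟨a, ha, haB⟩

lemma isBlock_image_iff (hS : G.IsSeparation v A B) (hG : G.Connected) {s : Set A} :
    G.IsBlock (Subtype.val '' s) ↔ (G.induce A).IsBlock s := by
  have hiso (s' : Set A) : ((G.induce A).induce s').Nonseparable ↔
      (G.induce (Subtype.val '' s')).Nonseparable :=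
    ⟨(induceInduceIso G A s').nonseparable, (induceInduceIso G A s').symm.nonseparable⟩
  constructor
  · intro h
    refine ⟨((hiso s).2 h.nonseparable).1, ((hiso s).2 h.nonseparable).2, fun s' hss' hs' => ?_⟩
    exact Subtype.val_injective.image_injective (h.2.2 _ (image_mono hss') ((hiso s').1 hs'))
  · intro h
    refine ⟨((hiso s).1 h.nonseparable).1, ((hiso s).1 h.nonseparable).2, fun C hsC hC => ?_⟩
    have := hS.nontrivial_left
    obtain ⟨c, hcs, hcv⟩ :=
      h.exists_mem_ne (hS.connected_induce_left hG).preconnected ⟨v, hS.mem_left⟩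
    have hCA : C ⊆ A := hS.subset_left_of_nonseparable hC (hsC (mem_image_of_mem _ hcs))
      fun hcB => hcv (Subtype.ext (hS.eq_of_mem_of_mem c.2 hcB))
    obtain ⟨s', rfl⟩ := CanLift.prf (β := Set A) C hCA
    rw [h.2.2 s' ((image_subset_image_iff Subtype.val_injective).1 hsC) ((hiso s').2 hC)]

lemma hasTreeSpanner_induce_of_isBlock (hS : G.IsSeparation v A B) (hG : G.Connected) {t : ℕ}
    (h : ∀ s, (G.induce A).IsBlock s → ((G.induce A).induce s).HasTreeSpanner t) {C : Set V}
    (hC : G.IsBlock C) (hCA : C ⊆ A) : (G.induce C).HasTreeSpanner t := by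
  obtain ⟨s, rfl⟩ := CanLift.prf (β := Set A) C hCA
  exact (induceInduceIso G A s).hasTreeSpanner (h s ((hS.isBlock_image_iff hG).1 hC))

lemma forall_isBlock_hasTreeSpanner_iff (hS : G.IsSeparation v A B) (hG : G.Connected)
    {t : ℕ} : (∀ C, G.IsBlock C → (G.induce C).HasTreeSpanner t) ↔
      (∀ s, (G.induce A).IsBlock s → ((G.induce A).induce s).HasTreeSpanner t) ∧
      (∀ s, (G.induce B).IsBlock s → ((G.induce B).induce s).HasTreeSpanner t) := by
  refine ⟨fun h => ⟨fun s hs => ?_, fun s hs => ?_⟩, fun ⟨hA, hB⟩ C hC => ?_⟩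
  · exact (induceInduceIso G A s).symm.hasTreeSpanner (h _ ((hS.isBlock_image_iff hG).2 hs))
  · exact (induceInduceIso G B s).symm.hasTreeSpanner
      (h _ ((hS.symm.isBlock_image_iff hG).2 hs))
  · rcases hS.subset_or_subset_of_nonseparable hC.nonseparable with hCA | hCB
    · exact hS.hasTreeSpanner_induce_of_isBlock hG hA hC hCA
    · exact hS.symm.hasTreeSpanner_induce_of_isBlock hG hB hC hCB

end IsSeparation

/-- The sides of a cut vertex `v` separating `x` from `y`: the vertices reachable from `x`
avoiding `v`, and the rest, both together with `v`. -/
lemma exists_isSeparation_of_not_noCutVertex (h : ¬G.NoCutVertex) :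
    ∃ v A B, G.IsSeparation v A B := by
  simp only [NoCutVertex, not_forall, not_exists, not_not] at h
  obtain ⟨v, x, y, hxv, hyv, hxy⟩ := h
  let R : Set V := {u | ∃ p : G.Walk x u, v ∉ p.support}
  have hx : x ∈ R := ⟨.nil, by simpa using hxv.symm⟩
  have hy : y ∉ R := fun ⟨p, hp⟩ => hp (hxy p)
  refine ⟨v, insert v R, insert v Rᶜ, ?_, ?_, fun a b ha hb hab => ?_, ⟨x, ?_⟩,
    ⟨y, ?_⟩⟩
  · ext u
    simp only [mem_union, mem_insert_iff, mem_compl_iff, mem_univ, iff_true]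
    tauto
  · ext u
    simp only [mem_inter_iff, mem_insert_iff, mem_compl_iff, mem_singleton_iff]
    tauto
  · simp only [mem_insert_iff, mem_compl_iff, not_or, not_not] at ha hb
    obtain ⟨p, hp⟩ := ha.2
    exact hb.2 ⟨p.concat hab, by simpa [Walk.support_concat] using ⟨hp, Ne.symm hb.1⟩⟩
  · simp [hx, hxv]
  · simp [hy, hyv]

lemma hasTreeSpanner_iff_forall_isBlock_of_nonseparable (hG : G.Nonseparable) {t : ℕ} :
    G.HasTreeSpanner t ↔ ∀ B, G.IsBlock B → (G.induce B).HasTreeSpanner t := by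
  refine ⟨fun h B hB => ?_,
    fun h => (induceUnivIso G).hasTreeSpanner (h univ (isBlock_univ hG))⟩
  rw [hB.eq_univ hG]
  exact (induceUnivIso G).symm.hasTreeSpanner h

theorem hasTreeSpanner_iff_forall_isBlock [Finite V] (hG : G.Connected) {t : ℕ} :
    G.HasTreeSpanner t ↔ ∀ B, G.IsBlock B → (G.induce B).HasTreeSpanner t := by
  induction hn : Nat.card V using Nat.strong_induction_on generalizing V with
  | _ n ih =>
  by_cases hcut : G.NoCutVertex
  · exact hasTreeSpanner_iff_forall_isBlock_of_nonseparable ⟨hG, hcut⟩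
  obtain ⟨v, A, B, hS⟩ := exists_isSeparation_of_not_noCutVertex hcut
  rw [hS.hasTreeSpanner_iff hG, hS.forall_isBlock_hasTreeSpanner_iff hG,
    ih _ (hn ▸ hS.card_left_lt) (hS.connected_induce_left hG) rfl,
    ih _ (hn ▸ hS.symm.card_left_lt) (hS.symm.connected_induce_left hG) rfl]

end SimpleGraph

/-- A graph admits a tree 3-spanner iff every block of it admits a tree 3-spanner. A block is
a maximal set of vertices inducing a connected subgraph with no cut-vertex. -/
theorem stmt_13 {V : Type*} [Fintype V] (G : SimpleGraph V) (hG : G.Connected) :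
    (∃ T : SimpleGraph V, T ≤ G ∧ T.IsTree ∧
        ∀ x y : V, T.dist x y ≤ 3 * G.dist x y) ↔
    (∀ B : Set V,
      ((G.induce B).Connected ∧
        (∀ v x y : B, x ≠ v → y ≠ v →
          ∃ p : (G.induce B).Walk x y, v ∉ p.support) ∧
        (∀ B' : Set V, B ⊆ B' →
          ((G.induce B').Connected ∧
            ∀ v x y : B', x ≠ v → y ≠ v →
              ∃ p : (G.induce B').Walk x y, v ∉ p.support) → B' = B)) →
      ∃ T : SimpleGraph B, T ≤ G.induce B ∧ T.IsTree ∧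
        ∀ x y : B, T.dist x y ≤ 3 * (G.induce B).dist x y) :=
  SimpleGraph.hasTreeSpanner_iff_forall_isBlock hG
end

section
/- Let G be a finite simple graph and T a tree 3-spanner of G with 5-center {u,v}, and suppose T is uv-concentrated. Let X and Y be connected components of G \ N_G[u,v] such that some vertex of X is at T-distance 2 from u (on the u-side) and some vertex of Y is at T-distance 2 from v (on the v-side). Let Q^u be the component of G \ N_G[u] containing X and Q^v the component of G \ N_G[v] containing Y. Then Q^u ∪ N_G(Q^u) and Q^v ∪ N_G(Q^v) are disjoint. -/
open SimpleGraph

set_option linter.unusedSectionVars false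

section aux
variable {V : Type*} [DecidableEq V] {T : SimpleGraph V} {u v : V}

private lemma tree_dist_ne (hT : T.IsTree) (hadj : T.Adj u v) (z : V) :
    T.dist z u ≠ T.dist z v := by
  intro h
  have hc := hT.isConnected
  have huv : T.dist u v = 1 := SimpleGraph.dist_eq_one_iff_adj.mpr hadj
  obtain ⟨P, hP, hPlen⟩ := (hc z u).exists_path_of_dist
  have hzu : T.dist z u ≠ 0 := by
    intro h0
    have : z = u := hc.dist_eq_zero_iff.mp h0
    subst this
    rw [SimpleGraph.dist_self] at h
    rw [← h] at huv
    omega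
  have hvP : v ∉ P.support := by
    intro hv
    have h1 : T.dist z v ≤ (P.takeUntil v hv).length := SimpleGraph.dist_le _
    have h2 : T.dist v u ≤ (P.dropUntil v hv).length := SimpleGraph.dist_le _
    have h3 := congrArg SimpleGraph.Walk.length (P.take_spec hv)
    rw [SimpleGraph.Walk.length_append] at h3
    have huv' : T.dist v u = 1 := by rw [SimpleGraph.dist_comm]; exact huv
    omega
  have hvP' : v ∉ P.reverse.support := by
    rw [SimpleGraph.Walk.support_reverse, List.mem_reverse]; exact hvP
  set P1 : T.Walk z v := (SimpleGraph.Walk.cons hadj.symm P.reverse).reverse with hP1def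
  have hP1 : P1.IsPath := ((hP.reverse).cons hvP').reverse
  have hP1len : P1.length = T.dist z u + 1 := by
    simp [hP1def, hPlen]
  obtain ⟨Q, hQ, hQlen⟩ := (hc z v).exists_path_of_dist
  have := (hT.existsUnique_path z v).unique hP1 hQ
  have : P1.length = Q.length := by rw [this]
  omega

private lemma dist_succ (hT : T.IsTree) (hadj : T.Adj u v) {z : V}
    (hz : T.dist z u < T.dist z v) : T.dist z v = T.dist z u + 1 := by
  have hc := hT.isConnected
  have huv : T.dist u v = 1 := SimpleGraph.dist_eq_one_iff_adj.mpr hadj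
  have := hc.dist_triangle (u := z) (v := u) (w := v)
  omega

private lemma crossing (hT : T.IsTree) (hadj : T.Adj u v) {x y : V} (hxy : T.Adj x y)
    (hx : T.dist x u < T.dist x v) (hy : ¬ T.dist y u < T.dist y v) : x = u ∧ y = v := by
  have hc := hT.isConnected
  have hy' : T.dist y v < T.dist y u :=
    lt_of_le_of_ne (not_lt.1 hy) (Ne.symm (tree_dist_ne hT hadj y))
  have hxv : T.dist x v = T.dist x u + 1 := dist_succ hT hadj hx
  have hyu : T.dist y u = T.dist y v + 1 := dist_succ hT hadj.symm hy'
  have hxy1 : T.dist x y = 1 := SimpleGraph.dist_eq_one_iff_adj.mpr hxy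
  have hyx1 : T.dist y x = 1 := by rw [SimpleGraph.dist_comm]; exact hxy1
  have h1 : T.dist y u ≤ T.dist y x + T.dist x u := hc.dist_triangle
  have h2 : T.dist x v ≤ T.dist x y + T.dist y v := hc.dist_triangle
  by_cases hyv : y = v
  · subst hyv
    have h0 : T.dist y y = 0 := SimpleGraph.dist_self
    have : T.dist x u = 0 := by omega
    exact ⟨hc.dist_eq_zero_iff.mp this, rfl⟩
  · exfalso
    obtain ⟨P, hP, hPlen⟩ := (hc x u).exists_path_of_dist
    have hvP : v ∉ P.support := by
      intro hv
      have ht1 : T.dist x v ≤ (P.takeUntil v hv).length := SimpleGraph.dist_le _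
      have ht2 : (P.takeUntil v hv).length ≤ P.length :=
        SimpleGraph.Walk.length_takeUntil_le P hv
      omega
    have hvP' : v ∉ P.reverse.support := by
      rw [SimpleGraph.Walk.support_reverse, List.mem_reverse]; exact hvP
    set P1 : T.Walk x v := (SimpleGraph.Walk.cons hadj.symm P.reverse).reverse with hP1def
    have hP1 : P1.IsPath := ((hP.reverse).cons hvP').reverse
    obtain ⟨Q, hQ, hQlen⟩ := (hc y v).exists_path_of_dist
    have hxQ : x ∉ Q.support := by
      intro hx'
      have ht1 : T.dist x v ≤ (Q.dropUntil x hx').length := SimpleGraph.dist_le _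
      have ht2 : (Q.dropUntil x hx').length ≤ Q.length :=
        SimpleGraph.Walk.length_dropUntil_le Q hx'
      omega
    have hP2 : (SimpleGraph.Walk.cons hxy Q).IsPath := hQ.cons hxQ
    have heq : P1 = SimpleGraph.Walk.cons hxy Q := (hT.existsUnique_path x v).unique hP1 hP2
    have hy1 : y ∈ P1.support := by
      rw [heq]
      simp [SimpleGraph.Walk.support_cons]
    have hyP : y ∈ P.support := by
      rw [hP1def, SimpleGraph.Walk.support_reverse, List.mem_reverse,
        SimpleGraph.Walk.support_cons] at hy1
      rcases List.mem_cons.mp hy1 with h | h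
      · exact absurd h hyv
      · rwa [SimpleGraph.Walk.support_reverse, List.mem_reverse] at h
    have ht1 : T.dist y u ≤ (P.dropUntil y hyP).length := SimpleGraph.dist_le _
    have ht2 : (P.dropUntil y hyP).length ≤ P.length :=
      SimpleGraph.Walk.length_dropUntil_le P hyP
    omega

private lemma walk_bound (hT : T.IsTree) (hadj : T.Adj u v) :
    ∀ {z w : V} (W : T.Walk z w), T.dist z u < T.dist z v → ¬ T.dist w u < T.dist w v →
      T.dist z u + 1 + T.dist v w ≤ W.length := by
  intro z w W
  induction W with
  | nil => intro h1 h2; exact absurd h1 h2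
  | @cons a b c hab W ih =>
    intro h1 h2
    rw [SimpleGraph.Walk.length_cons]
    by_cases hb : T.dist b u < T.dist b v
    · have hih := ih hb h2
      have hab1 : T.dist a b = 1 := SimpleGraph.dist_eq_one_iff_adj.mpr hab
      have htri : T.dist a u ≤ T.dist a b + T.dist b u := hT.isConnected.dist_triangle
      omega
    · obtain ⟨rfl, rfl⟩ := crossing hT hadj hab h1 hb
      have h0 : T.dist a a = 0 := SimpleGraph.dist_self
      have hd : T.dist b c ≤ W.length := SimpleGraph.dist_le W
      omega

private lemma cross_dist (hT : T.IsTree) (hadj : T.Adj u v) {z w : V}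
    (hz : T.dist z u < T.dist z v) (hw : ¬ T.dist w u < T.dist w v) :
    T.dist z u + 1 + T.dist v w ≤ T.dist z w := by
  obtain ⟨P, _, hPlen⟩ := (hT.isConnected z w).exists_path_of_dist
  rw [← hPlen]
  exact walk_bound hT hadj P hz hw

private lemma reach_ind {G : SimpleGraph V} {S : Set V} {Pr : V → Prop} :
    ∀ {a b : S}, (G.induce S).Walk a b → Pr a →
      (∀ x y : V, x ∈ S → y ∈ S → Pr x → G.Adj x y → Pr y) → Pr b := by
  intro a b W
  induction W with
  | nil => intro h _; exact h
  | @cons a b c hab W ih =>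
    intro h step
    exact ih (step a b a.2 b.2 h (by exact hab)) step

end aux

/-- For a `uv`-concentrated tree 3-spanner, if `p` witnesses a component of `G \ N_G[u,v]` on
the `u`-side (at `T`-distance 2 from `u`) and `q` one on the `v`-side, and `Q^u`, `Q^v` are
the components of `G \ N_G[u]`, `G \ N_G[v]` containing them, then
`Q^u ∪ N_G(Q^u)` and `Q^v ∪ N_G(Q^v)` are disjoint. -/
theorem stmt_15 {V : Type*} [Fintype V] (G T : SimpleGraph V) (u v p q : V)
    (hle : T ≤ G) (hT : T.IsTree)
    (hspan : ∀ x y : V, T.dist x y ≤ 3 * G.dist x y)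
    (hadj : T.Adj u v)
    (hcenter : ∀ w : V, T.dist u w ≤ 2 ∨ T.dist v w ≤ 2)
    (hconc_u : ∀ w : V, G.Adj u w → T.dist w u < T.dist w v → T.Adj u w)
    (hconc_v : ∀ w : V, G.Adj v w → T.dist w v < T.dist w u → T.Adj v w)
    (hp : ¬ (p = u ∨ p = v ∨ G.Adj u p ∨ G.Adj v p))
    (hq : ¬ (q = u ∨ q = v ∨ G.Adj u q ∨ G.Adj v q))
    (hpu : T.dist u p = 2) (hpu' : T.dist u p < T.dist v p)
    (hqv : T.dist v q = 2) (hqv' : T.dist v q < T.dist u q)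
    (Su : Set V) (hSu : Su = {w | w ≠ u ∧ ¬ G.Adj u w}) (hpSu : p ∈ Su)
    (Sv : Set V) (hSv : Sv = {w | w ≠ v ∧ ¬ G.Adj v w}) (hqSv : q ∈ Sv)
    (Qu : Set V)
    (hQu : Qu = {w | ∃ hw : w ∈ Su, (G.induce Su).Reachable ⟨p, hpSu⟩ ⟨w, hw⟩})
    (Qv : Set V)
    (hQv : Qv = {w | ∃ hw : w ∈ Sv, (G.induce Sv).Reachable ⟨q, hqSv⟩ ⟨w, hw⟩}) :
    Disjoint (Qu ∪ {z | z ∉ Qu ∧ ∃ w ∈ Qu, G.Adj z w})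
      (Qv ∪ {z | z ∉ Qv ∧ ∃ w ∈ Qv, G.Adj z w}) := by
  classical
  have hc := hT.isConnected
  have hG3 : ∀ x y : V, G.Adj x y → T.dist x y ≤ 3 := by
    intro x y h
    have hs := hspan x y
    rw [show G.dist x y = 1 from SimpleGraph.dist_eq_one_iff_adj.mpr h] at hs
    omega
  have claimA : ∀ w ∈ Qu, T.dist u w = 2 ∧ T.dist w u < T.dist w v := by
    intro w hw
    rw [hQu] at hw
    obtain ⟨hwS, hreach⟩ := hw
    obtain ⟨W⟩ := hreach
    refine reach_ind (Pr := fun w => T.dist u w = 2 ∧ T.dist w u < T.dist w v) W ?_ ?_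
    · constructor
      · exact hpu
      · show T.dist p u < T.dist p v
        rw [SimpleGraph.dist_comm (u := p) (v := u), SimpleGraph.dist_comm (u := p) (v := v)]
        exact hpu'
    · intro x y hxS hyS hx hxyG
      rw [hSu] at hyS
      obtain ⟨hx2, hxside⟩ := hx
      have hTxy : T.dist x y ≤ 3 := hG3 x y hxyG
      have hxu : T.dist x u = 2 := by rw [SimpleGraph.dist_comm]; exact hx2
      have hyside : T.dist y u < T.dist y v := by
        by_contra hcon
        have hcd := cross_dist hT hadj hxside hcon
        have hyv0 : T.dist v y = 0 := by omega
        have : y = v := (hc.dist_eq_zero_iff.mp hyv0).symm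
        subst this
        exact hyS.2 (hle hadj)
      refine ⟨?_, hyside⟩
      have hub : T.dist u y ≤ 2 := by
        rcases hcenter y with h | h
        · exact h
        · have e1 : T.dist u y = T.dist y u := SimpleGraph.dist_comm ..
          have e2 : T.dist v y = T.dist y v := SimpleGraph.dist_comm ..
          omega
      have hne0 : T.dist u y ≠ 0 := fun h0 => hyS.1 (hc.dist_eq_zero_iff.mp h0).symm
      have hne1 : T.dist u y ≠ 1 := fun h1 =>
        hyS.2 (hle (SimpleGraph.dist_eq_one_iff_adj.mp h1))
      omega
  have claimB : ∀ w ∈ Qv, T.dist v w = 2 ∧ T.dist w v < T.dist w u := by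
    intro w hw
    rw [hQv] at hw
    obtain ⟨hwS, hreach⟩ := hw
    obtain ⟨W⟩ := hreach
    refine reach_ind (Pr := fun w => T.dist v w = 2 ∧ T.dist w v < T.dist w u) W ?_ ?_
    · constructor
      · exact hqv
      · show T.dist q v < T.dist q u
        rw [SimpleGraph.dist_comm (u := q) (v := u), SimpleGraph.dist_comm (u := q) (v := v)]
        exact hqv'
    · intro x y hxS hyS hx hxyG
      rw [hSv] at hyS
      obtain ⟨hx2, hxside⟩ := hx
      have hTxy : T.dist x y ≤ 3 := hG3 x y hxyG
      have hxv : T.dist x v = 2 := by rw [SimpleGraph.dist_comm]; exact hx2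
      have hyside : T.dist y v < T.dist y u := by
        by_contra hcon
        have hcd := cross_dist hT hadj.symm hxside hcon
        have hyu0 : T.dist u y = 0 := by omega
        have : y = u := (hc.dist_eq_zero_iff.mp hyu0).symm
        subst this
        exact hyS.2 (hle hadj).symm
      refine ⟨?_, hyside⟩
      have hub : T.dist v y ≤ 2 := by
        rcases hcenter y with h | h
        · have e1 : T.dist v y = T.dist y v := SimpleGraph.dist_comm ..
          have e2 : T.dist u y = T.dist y u := SimpleGraph.dist_comm ..
          omega
        · exact h
      have hne0 : T.dist v y ≠ 0 := fun h0 => hyS.1 (hc.dist_eq_zero_iff.mp h0).symm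
      have hne1 : T.dist v y ≠ 1 := fun h1 =>
        hyS.2 (hle (SimpleGraph.dist_eq_one_iff_adj.mp h1))
      omega
  have hQuSu : ∀ w ∈ Qu, w ∈ Su := by
    intro w hw; rw [hQu] at hw; exact hw.1
  have hQvSv : ∀ w ∈ Qv, w ∈ Sv := by
    intro w hw; rw [hQv] at hw; exact hw.1
  rw [Set.disjoint_left]
  rintro z (hz | hz) (hz' | hz')
  · obtain ⟨_, h1⟩ := claimA z hz
    obtain ⟨_, h2⟩ := claimB z hz'
    omega
  · obtain ⟨hz2, hzside⟩ := claimA z hz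
    obtain ⟨_, w, hwQv, hzw⟩ := hz'
    obtain ⟨hw2, hwside⟩ := claimB w hwQv
    have hcd := cross_dist (w := w) hT hadj hzside (by omega)
    have h3 := hG3 z w hzw
    have e1 : T.dist z u = T.dist u z := SimpleGraph.dist_comm ..
    omega
  · obtain ⟨_, w, hwQu, hzw⟩ := hz
    obtain ⟨hw2, hwside⟩ := claimA w hwQu
    obtain ⟨hz2, hzside⟩ := claimB z hz'
    have hcd := cross_dist (w := z) hT hadj hwside (by omega)
    have h3 := hG3 z w hzw
    have e1 : T.dist w u = T.dist u w := SimpleGraph.dist_comm ..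
    have e2 : T.dist w z = T.dist z w := SimpleGraph.dist_comm ..
    have e3 : T.dist v z = T.dist z v := SimpleGraph.dist_comm ..
    omega
  · obtain ⟨hzQu, w, hwQu, hzw⟩ := hz
    obtain ⟨hzQv, w', hwQv, hzw'⟩ := hz'
    obtain ⟨hw2, hwside⟩ := claimA w hwQu
    obtain ⟨hw2', hwside'⟩ := claimB w' hwQv
    by_cases hzs : T.dist z u < T.dist z v
    · have hcd := cross_dist (w := w') hT hadj hzs (by omega)
      have h3 := hG3 z w' hzw'
      have hz0 : T.dist z u = 0 := by omega
      have : z = u := hc.dist_eq_zero_iff.mp hz0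
      subst this
      have hmem := hQuSu w hwQu
      rw [hSu] at hmem
      exact hmem.2 hzw
    · have hzs' : T.dist z v < T.dist z u :=
        lt_of_le_of_ne (not_lt.1 hzs) (Ne.symm (tree_dist_ne hT hadj z))
      have hcd := cross_dist (w := w) hT hadj.symm hzs' (by omega)
      have h3 := hG3 z w hzw
      have hz0 : T.dist z v = 0 := by omega
      have : z = v := hc.dist_eq_zero_iff.mp hz0
      subst this
      have hmem := hQvSv w' hwQv
      rw [hSv] at hmem
      exact hmem.2 hzw'
end
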